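/- arXiv:2510.14749 — 4 statements merged into one kernel-verified Lean document; each statement's English description precedes it below -/
import Mathlib

section
/- (Tree unfolding: from Pr₊ᵛᵃʳ to Pr^ω) Let Pr₊ᵛᵃʳ be a CLKID^ω proof of Γ⊢Δ. Then there exists an LKID^ω proof Pr^ω of Γ⊢Δ such that FV(Pr^ω) = FV(Pr₊ᵛᵃʳ) and Θ(Pr^ω) = Θ(Pr₊ᵛᵃʳ), and there exists a function f^ω from the sequent occurrences of Pr^ω to those of Pr₊ᵛᵃʳ such that: (i) f^ω maps the conclusion of Pr^ω to the conclusion of Pr₊ᵛᵃʳ; (ii) f^ω(e) is syntactically identical to e for every sequent occurrence e of Pr^ω; (iii) for every rule instance in Pr^ω with conclusion eᵢ and premises e¹ᵢ₊₁,…,eⁿᵢ₊₁ of a rule (R), the same rule (R) has an instance in Pr₊ᵛᵃʳ with conclusion f^ω(eᵢ) and premises f^ω(e¹ᵢ₊₁),…,f^ω(eⁿᵢ₊₁) (identifying each bud with its companion, f^ω taking the companion), and every trace in that instance of Pr₊ᵛᵃʳ is preserved in the instance of Pr^ω. -/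
set_option maxHeartbeats 1000000

namespace CyclicProofs

/-! ### Signatures, terms and substitutions of FOL_ID.
Terms are in locally-nameless style: `fvar` are free variables (named by naturals)
and `bvar` are de Bruijn indices for quantifier-bound variables. -/

structure Signature where
  Func : Type
  arity : Func → ℕ
  OrdPred : Type
  ordArity : OrdPred → ℕ
  IndPred : Type
  indArity : IndPred → ℕ

inductive Term (S : Signature) : Type where
  | fvar : ℕ → Term S
  | bvar : ℕ → Term S
  | func : (f : S.Func) → (Fin (S.arity f) → Term S) → Term S

variable {S : Signature}

def Term.fv : Term S → Set ℕ
  | .fvar x => {x}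
  | .bvar _ => ∅
  | .func _ a => ⋃ i, Term.fv (a i)

/-- A term is *atomic* if it is a variable or a constant. -/
def Term.IsAtomic : Term S → Prop
  | .fvar _ => True
  | .bvar _ => False
  | .func f _ => S.arity f = 0

/-- Substitutions: (total) maps from variables to terms; a substitution
represents the finite mapping given by its restriction to its domain
`Subst.dom` (the set of variables it moves). -/
abbrev Subst (S : Signature) := ℕ → Term S

def Term.subst : Term S → Subst S → Term S
  | .fvar x, θ => θ x
  | .bvar n, _ => .bvar n
  | .func f a, θ => .func f (fun i => Term.subst (a i) θ)

def Subst.dom (θ : Subst S) : Set ℕ := {x | θ x ≠ Term.fvar x}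

def Subst.img (θ : Subst S) : Set (Term S) := θ '' Subst.dom θ

/-- An *atomic* substitution: every term in its image is a variable or a constant. -/
def Subst.Atomic (θ : Subst S) : Prop := ∀ x : ℕ, Term.IsAtomic (θ x)

/-- `Subst.update θ x y` is `θ[x → y]`: the substitution obtained from `θ` by
changing the image of `x` to the variable `y`. -/
def Subst.update (θ : Subst S) (x y : ℕ) : Subst S :=
  fun z => if z = x then Term.fvar y else θ z

/-- Composition `θ₁θ₂`, satisfying `t[θ₁θ₂] = (t[θ₁])[θ₂]`. -/
def Subst.comp (θ₁ θ₂ : Subst S) : Subst S := fun x => Term.subst (θ₁ x) θ₂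

theorem Term.subst_comp (t : Term S) (θ₁ θ₂ : Subst S) :
    Term.subst t (Subst.comp θ₁ θ₂) = Term.subst (Term.subst t θ₁) θ₂ := by
  induction t with
  | fvar x => rfl
  | bvar n => rfl
  | func f a ih => simp only [Term.subst]; exact congrArg _ (funext fun i => ih i)

/-- The partial-substitution closure `C_ps(Θ, X)`: the smallest set of substitutions
containing `Θ` and closed under overwriting `θ[x→y]` for `x, y ∈ X` and under
composition. -/
inductive Cps {S : Signature} (Θ : Set (Subst S)) (X : Set ℕ) : Subst S → Prop where
  | base {θ : Subst S} : θ ∈ Θ → Cps Θ X θ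
  | update {θ : Subst S} {x y : ℕ} :
      Cps Θ X θ → x ∈ X → y ∈ X → Cps Θ X (Subst.update θ x y)
  | comp {θ₁ θ₂ : Subst S} :
      Cps Θ X θ₁ → Cps Θ X θ₂ → Cps Θ X (Subst.comp θ₁ θ₂)

/-! ### Formulas of FOL_ID -/

inductive Formula (S : Signature) : Type where
  | ind : (P : S.IndPred) → (Fin (S.indArity P) → Term S) → Formula S
  | ord : (Q : S.OrdPred) → (Fin (S.ordArity Q) → Term S) → Formula S
  | eq : Term S → Term S → Formula S
  | not : Formula S → Formula S
  | or : Formula S → Formula S → Formula S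
  | and : Formula S → Formula S → Formula S
  | imp : Formula S → Formula S → Formula S
  | ex : Formula S → Formula S
  | all : Formula S → Formula S

def Formula.fv : Formula S → Set ℕ
  | .ind _ a => ⋃ i, Term.fv (a i)
  | .ord _ a => ⋃ i, Term.fv (a i)
  | .eq t u => t.fv ∪ u.fv
  | .not φ => φ.fv
  | .or φ ψ => φ.fv ∪ ψ.fv
  | .and φ ψ => φ.fv ∪ ψ.fv
  | .imp φ ψ => φ.fv ∪ ψ.fv
  | .ex φ => φ.fv
  | .all φ => φ.fv

/-- Capture-avoiding substitution of free variables (bound variables are de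
Bruijn indices, so no capture can occur). -/
def Formula.subst : Formula S → Subst S → Formula S
  | .ind P a, θ => .ind P (fun i => Term.subst (a i) θ)
  | .ord Q a, θ => .ord Q (fun i => Term.subst (a i) θ)
  | .eq t u, θ => .eq (t.subst θ) (u.subst θ)
  | .not φ, θ => .not (φ.subst θ)
  | .or φ ψ, θ => .or (φ.subst θ) (ψ.subst θ)
  | .and φ ψ, θ => .and (φ.subst θ) (ψ.subst θ)
  | .imp φ ψ, θ => .imp (φ.subst θ) (ψ.subst θ)
  | .ex φ, θ => .ex (φ.subst θ)
  | .all φ, θ => .all (φ.subst θ)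

/-- Opening: replace the bound variable `k` by the term `u`
(used to instantiate a quantifier). -/
def Term.openT : Term S → ℕ → Term S → Term S
  | .fvar x, _, _ => .fvar x
  | .bvar n, k, u => if n = k then u else .bvar n
  | .func f a, k, u => .func f (fun i => Term.openT (a i) k u)

def Formula.openF : Formula S → ℕ → Term S → Formula S
  | .ind P a, k, u => .ind P (fun i => Term.openT (a i) k u)
  | .ord Q a, k, u => .ord Q (fun i => Term.openT (a i) k u)
  | .eq t v, k, u => .eq (t.openT k u) (v.openT k u)
  | .not φ, k, u => .not (φ.openF k u)
  | .or φ ψ, k, u => .or (φ.openF k u) (ψ.openF k u)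
  | .and φ ψ, k, u => .and (φ.openF k u) (ψ.openF k u)
  | .imp φ ψ, k, u => .imp (φ.openF k u) (ψ.openF k u)
  | .ex φ, k, u => .ex (φ.openF (k+1) u)
  | .all φ, k, u => .all (φ.openF (k+1) u)

/-- The formula is an inductive-predicate atom. -/
def Formula.IsInd : Formula S → Prop
  | .ind _ _ => True
  | _ => False

noncomputable instance instDecEqFormula (S : Signature) : DecidableEq (Formula S) :=
  Classical.decEq _

/-! ### Sequents -/

/-- A sequent `Γ ⊢ Δ`: a pair of finite sets of formulas. -/
abbrev GSequent (F : Type) := Finset F × Finset F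

def fvSeq (e : GSequent (Formula S)) : Set ℕ :=
  {x | (∃ φ ∈ e.1, x ∈ Formula.fv φ) ∨ (∃ φ ∈ e.2, x ∈ Formula.fv φ)}

noncomputable def substSeq (e : GSequent (Formula S)) (θ : Subst S) : GSequent (Formula S) :=
  (e.1.image (Formula.subst · θ), e.2.image (Formula.subst · θ))

/-! ### Inductive definition sets -/

/-- A production `P(t⃗) ⇐ Q₁(u⃗₁), …, Qₙ(u⃗ₙ), P₁(t⃗₁), …, Pₘ(t⃗ₘ)`.
Its variables are the free variables occurring in it. -/
structure Production (S : Signature) where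
  pred : S.IndPred
  args : Fin (S.indArity pred) → Term S
  ordPrems : List ((Q : S.OrdPred) × (Fin (S.ordArity Q) → Term S))
  indPrems : List ((P : S.IndPred) × (Fin (S.indArity P) → Term S))

def Production.fv (pr : Production S) : Set ℕ :=
  (⋃ i, Term.fv (pr.args i)) ∪
  {x | ∃ q ∈ pr.ordPrems, ∃ i, x ∈ Term.fv (q.2 i)} ∪
  {x | ∃ p ∈ pr.indPrems, ∃ i, x ∈ Term.fv (p.2 i)}

/-- The case distinction of `Γ, P(u⃗) ⊢ Δ` for a production `pr` (whose variables
are renamed by `σ`):  `Γ, u⃗ = t⃗[σ], Q₁(u⃗₁)[σ], …, P₁(t⃗₁)[σ], … ⊢ Δ`. -/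
noncomputable def caseDist (Γ Δ : Finset (Formula S)) (P : S.IndPred)
    (u : Fin (S.indArity P) → Term S) (pr : Production S) (σ : Subst S) :
    GSequent (Formula S) :=
  @dite _ (pr.pred = P) (Classical.dec _)
    (fun h =>
      (Γ ∪ Finset.image (fun i : Fin (S.indArity P) =>
            Formula.eq (u i)
              (Term.subst (pr.args (Fin.cast (congrArg S.indArity h).symm i)) σ))
          Finset.univ
         ∪ (pr.ordPrems.map (fun q => Formula.ord q.1 (fun i => Term.subst (q.2 i) σ))).toFinset
         ∪ (pr.indPrems.map (fun p => Formula.ind p.1 (fun i => Term.subst (p.2 i) σ))).toFinset,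
       Δ))
    (fun _ => (Γ, Δ))

/-- `σ` renames the variables of the production `pr` to pairwise distinct
fresh variables (avoiding `avoid`). -/
def Freshening (σ : Subst S) (pr : Production S) (avoid : Set ℕ) : Prop :=
  (∀ z : ℕ, ∃ y : ℕ, σ z = Term.fvar y) ∧
  (∀ z ∈ Production.fv pr, ∀ y : ℕ, σ z = Term.fvar y → y ∉ avoid) ∧
  (∀ z₁ ∈ Production.fv pr, ∀ z₂ ∈ Production.fv pr, σ z₁ = σ z₂ → z₁ = z₂)

/-! ### Standard-model semantics -/

structure Structure (S : Signature) where
  Dom : Type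
  nonempty : Nonempty Dom
  funcI : (f : S.Func) → (Fin (S.arity f) → Dom) → Dom
  ordI : (Q : S.OrdPred) → (Fin (S.ordArity Q) → Dom) → Prop

noncomputable def Structure.dflt (M : Structure S) : M.Dom := Classical.choice M.nonempty

def Term.eval (M : Structure S) (ρ η : ℕ → M.Dom) : Term S → M.Dom
  | .fvar x => ρ x
  | .bvar n => η n
  | .func f a => M.funcI f (fun i => Term.eval M ρ η (a i))

/-- Interpretations of the inductive predicates in a structure. -/
abbrev IndInterp (M : Structure S) := (P : S.IndPred) → (Fin (S.indArity P) → M.Dom) → Prop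

/-- `I` is a prefixed point of the monotone operator determined by the
definition set `Φ`. -/
def PrefixedPoint (Φ : Finset (Production S)) (M : Structure S) (I : IndInterp M) : Prop :=
  ∀ pr ∈ Φ, ∀ ρ : ℕ → M.Dom,
    (∀ q ∈ pr.ordPrems, M.ordI q.1 (fun i => Term.eval M ρ (fun _ => M.dflt) (q.2 i))) →
    (∀ p ∈ pr.indPrems, I p.1 (fun i => Term.eval M ρ (fun _ => M.dflt) (p.2 i))) →
    I pr.pred (fun i => Term.eval M ρ (fun _ => M.dflt) (pr.args i))

/-- The standard (least fixed point) interpretation of the inductive predicates. -/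
def stdInterp (Φ : Finset (Production S)) (M : Structure S) : IndInterp M :=
  fun P v => ∀ I : IndInterp M, PrefixedPoint Φ M I → I P v

def push (M : Structure S) (d : M.Dom) (η : ℕ → M.Dom) : ℕ → M.Dom
  | 0 => d
  | n + 1 => η n

def Formula.sat (M : Structure S) (I : IndInterp M) :
    Formula S → (ℕ → M.Dom) → (ℕ → M.Dom) → Prop
  | .ind P a, ρ, η => I P (fun i => Term.eval M ρ η (a i))
  | .ord Q a, ρ, η => M.ordI Q (fun i => Term.eval M ρ η (a i))
  | .eq t u, ρ, η => Term.eval M ρ η t = Term.eval M ρ η u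
  | .not φ, ρ, η => ¬ Formula.sat M I φ ρ η
  | .or φ ψ, ρ, η => Formula.sat M I φ ρ η ∨ Formula.sat M I ψ ρ η
  | .and φ ψ, ρ, η => Formula.sat M I φ ρ η ∧ Formula.sat M I ψ ρ η
  | .imp φ ψ, ρ, η => Formula.sat M I φ ρ η → Formula.sat M I ψ ρ η
  | .ex φ, ρ, η => ∃ d : M.Dom, Formula.sat M I φ ρ (push M d η)
  | .all φ, ρ, η => ∀ d : M.Dom, Formula.sat M I φ ρ (push M d η)

/-- Validity of a sequent with respect to the standard models. -/
def validSeq (Φ : Finset (Production S)) (e : GSequent (Formula S)) : Prop :=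
  ∀ (M : Structure S) (ρ : ℕ → M.Dom),
    (∀ φ ∈ e.1, Formula.sat M (stdInterp Φ M) φ ρ (fun _ => M.dflt)) →
    ∃ ψ ∈ e.2, Formula.sat M (stdInterp Φ M) ψ ρ (fun _ => M.dflt)
/-! ### A generic framework for cyclic and infinitary proof systems.

A derivation system is given by a type of sequents `Q`, a type `F` of trace
tokens (occurrences of inductive-predicate atoms in antecedents), a type `N`
of rule names, a type `Sb` of substitutions, a type `App c ps` of rule
instances with conclusion `c` and premise list `ps`, a trace relation and a
progress relation along rule instances, and the set of substitutions used by
a rule instance. -/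

structure DerivSystem (Q F N Sb : Type) where
  App : Q → List Q → Type
  name : {c : Q} → {ps : List Q} → App c ps → N
  trace : {c : Q} → {ps : List Q} → App c ps → ℕ → F → F → Prop
  prog : {c : Q} → {ps : List Q} → App c ps → ℕ → F → F → Prop
  substs : {c : Q} → {ps : List Q} → App c ps → Set Sb
  inAnt : Q → F → Prop

variable {Q F N Sb : Type}

/-- A pre-proof of a cyclic-proof system: a finite derivation tree (nodes are
lists of child indices, the root is `[]`), whose non-axiom leaves (*buds*) are
each assigned an internal node (its *companion*) labeled by a syntactically
identical sequent. Every non-bud node carries a rule instance. -/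
structure CPreProof (D : DerivSystem Q F N Sb) where
  dom : Set (List ℕ)
  fin : dom.Finite
  root_mem : ([] : List ℕ) ∈ dom
  down : ∀ (p : List ℕ) (i : ℕ), p ++ [i] ∈ dom → p ∈ dom
  seq : List ℕ → Q
  prems : List ℕ → List Q
  bud : List ℕ → Bool
  rule : ∀ (p : List ℕ), p ∈ dom → bud p = false → D.App (seq p) (prems p)
  child_mem : ∀ (p : List ℕ), p ∈ dom → bud p = false →
      ∀ i : ℕ, (p ++ [i] ∈ dom ↔ i < (prems p).length)
  child_seq : ∀ (p : List ℕ) (hp : p ∈ dom) (hb : bud p = false)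
      (i : ℕ) (h : i < (prems p).length), seq (p ++ [i]) = (prems p).get ⟨i, h⟩
  bud_leaf : ∀ (p : List ℕ), p ∈ dom → bud p = true → ∀ i : ℕ, p ++ [i] ∉ dom
  comp : List ℕ → List ℕ
  comp_mem : ∀ (p : List ℕ), p ∈ dom → bud p = true → comp p ∈ dom
  comp_not_bud : ∀ (p : List ℕ), p ∈ dom → bud p = true → bud (comp p) = false
  comp_seq : ∀ (p : List ℕ), p ∈ dom → bud p = true → seq (comp p) = seq p

variable {D : DerivSystem Q F N Sb}

/-- An infinite path in the graph of a cyclic pre-proof (edges: conclusions to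
premises, and buds to their companions). -/
structure CPath (T : CPreProof D) where
  pos : ℕ → List ℕ
  mem : ∀ n, pos n ∈ T.dom
  step : ∀ n, (T.bud (pos n) = true ∧ pos (n + 1) = T.comp (pos n)) ∨
              (∃ i : ℕ, pos (n + 1) = pos n ++ [i] ∧ pos n ++ [i] ∈ T.dom)

/-- One trace step from node `p` (token `C`) to node `p'` (token `C'`);
`b = true` records a progressing step. -/
def CPreProof.tstep (T : CPreProof D) (p p' : List ℕ) (C C' : F) (b : Bool) : Prop :=
  (T.bud p = true ∧ p' = T.comp p ∧ C' = C ∧ D.inAnt (T.seq p) C ∧ b = false) ∨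
  (∃ (hp : p ∈ T.dom) (hb : T.bud p = false) (i : ℕ), p' = p ++ [i] ∧
      D.trace (T.rule p hp hb) i C C' ∧
      (b = true → D.prog (T.rule p hp hb) i C C'))

/-- There is an infinitely progressing trace following (a tail of) the path. -/
def CPath.hasInfTrace {T : CPreProof D} (π : CPath T) : Prop :=
  ∃ (k : ℕ) (C : ℕ → F) (b : ℕ → Bool),
    (∀ n, k ≤ n → T.tstep (π.pos n) (π.pos (n + 1)) (C n) (C (n + 1)) (b n)) ∧
    (∀ m, ∃ n, m ≤ n ∧ b n = true)

/-- The global trace condition. -/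
def CPreProof.GTC (T : CPreProof D) : Prop := ∀ π : CPath T, π.hasInfTrace

def CPreProof.namesUsed (T : CPreProof D) : Set N :=
  {ν | ∃ (p : List ℕ) (hp : p ∈ T.dom) (hb : T.bud p = false), D.name (T.rule p hp hb) = ν}

/-- `Θ(Pr)`: the set of substitutions used in instances of (Subst) in `Pr`. -/
def CPreProof.Theta (T : CPreProof D) : Set Sb :=
  {s | ∃ (p : List ℕ) (hp : p ∈ T.dom) (hb : T.bud p = false), s ∈ D.substs (T.rule p hp hb)}

/-- Identify a bud with its companion. -/
def CPreProof.resolve (T : CPreProof D) (q : List ℕ) : List ℕ :=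
  if T.bud q then T.comp q else q

/-- Provability by a cyclic proof using only rules whose names are `allowed`. -/
def DerivSystem.ProvableWith (D : DerivSystem Q F N Sb) (allowed : Set N) (e : Q) : Prop :=
  ∃ T : CPreProof D, T.seq [] = e ∧ T.GTC ∧ T.namesUsed ⊆ allowed

/-- A chain of applications of the rule named `sn` (i.e. (Subst)) and
bud-companion identifications, from `q` up to a node `q'` carrying a
rule instance not named `sn`. -/
inductive CPreProof.substChain (T : CPreProof D) (sn : N) : List ℕ → List ℕ → Prop where
  | here {q : List ℕ} (hq : q ∈ T.dom) (hb : T.bud q = false)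
      (hr : D.name (T.rule q hq hb) ≠ sn) : substChain T sn q q
  | jump {q q' : List ℕ} (hq : q ∈ T.dom) (hb : T.bud q = true) :
      substChain T sn (T.comp q) q' → substChain T sn q q'
  | sub {q q' : List ℕ} (hq : q ∈ T.dom) (hb : T.bud q = false)
      (hs : D.name (T.rule q hq hb) = sn) :
      substChain T sn (q ++ [0]) q' → substChain T sn q q'

/-- A trace from the token `C` at `q`, through applications of the rule named
`sn` ((Subst)) and bud-companion identifications, followed by one application
of a rule not named `sn`, into its `j`-th premise, ending in the token `C'`;
`b = true` records that the final step progresses. -/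
inductive CPreProof.chunkTrace (T : CPreProof D) (sn : N) :
    List ℕ → ℕ → F → F → Bool → Prop where
  | here {q : List ℕ} {j : ℕ} {C C' : F} {b : Bool}
      (hq : q ∈ T.dom) (hb : T.bud q = false)
      (hr : D.name (T.rule q hq hb) ≠ sn)
      (ht : D.trace (T.rule q hq hb) j C C')
      (hpr : b = true → D.prog (T.rule q hq hb) j C C') :
      chunkTrace T sn q j C C' b
  | jump {q : List ℕ} {j : ℕ} {C C' : F} {b : Bool}
      (hq : q ∈ T.dom) (hb : T.bud q = true) :
      chunkTrace T sn (T.comp q) j C C' b → chunkTrace T sn q j C C' b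
  | sub {q : List ℕ} {j : ℕ} {C C₁ C' : F} {b : Bool}
      (hq : q ∈ T.dom) (hb : T.bud q = false)
      (hs : D.name (T.rule q hq hb) = sn)
      (ht : D.trace (T.rule q hq hb) 0 C C₁) :
      chunkTrace T sn (q ++ [0]) j C₁ C' b → chunkTrace T sn q j C C' b

/-- The step at time `m` of the path `π'` passes through a (Subst) rule or a
bud-companion edge. -/
def CPreProof.PassAt (T : CPreProof D) (sn : N) (π : CPath T) (m : ℕ) : Prop :=
  (T.bud (π.pos m) = true ∧ π.pos (m + 1) = T.comp (π.pos m)) ∨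
  (∃ (hp : π.pos m ∈ T.dom) (hb : T.bud (π.pos m) = false),
      D.name (T.rule (π.pos m) hp hb) = sn ∧ π.pos (m + 1) = π.pos m ++ [0])

/-- The step at time `m` of the path goes to the `j`-th premise of a rule
instance not named `sn`. -/
def CPreProof.ChildAt (T : CPreProof D) (sn : N) (π : CPath T) (m j : ℕ) : Prop :=
  π.pos (m + 1) = π.pos m ++ [j] ∧
  ∃ (hp : π.pos m ∈ T.dom) (hb : T.bud (π.pos m) = false),
    D.name (T.rule (π.pos m) hp hb) ≠ sn

/-- The step at time `m` of the path is a bud-companion edge. -/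
def CPreProof.BudAt (T : CPreProof D) (π : CPath T) (m : ℕ) : Prop :=
  T.bud (π.pos m) = true ∧ π.pos (m + 1) = T.comp (π.pos m)

/-! #### Infinitary pre-proofs (possibly infinite derivation trees, all of
whose leaves are axioms, i.e. every node carries a rule instance). -/

structure IPreProof (D : DerivSystem Q F N Sb) where
  dom : Set (List ℕ)
  root_mem : ([] : List ℕ) ∈ dom
  down : ∀ (p : List ℕ) (i : ℕ), p ++ [i] ∈ dom → p ∈ dom
  seq : List ℕ → Q
  prems : List ℕ → List Q
  rule : ∀ (p : List ℕ), p ∈ dom → D.App (seq p) (prems p)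
  child_mem : ∀ (p : List ℕ), p ∈ dom → ∀ i : ℕ, (p ++ [i] ∈ dom ↔ i < (prems p).length)
  child_seq : ∀ (p : List ℕ) (hp : p ∈ dom) (i : ℕ) (h : i < (prems p).length),
      seq (p ++ [i]) = (prems p).get ⟨i, h⟩

structure IPath (T : IPreProof D) where
  pos : ℕ → List ℕ
  mem : ∀ n, pos n ∈ T.dom
  step : ∀ n, ∃ i : ℕ, pos (n + 1) = pos n ++ [i] ∧ pos n ++ [i] ∈ T.dom

def IPreProof.tstep (T : IPreProof D) (p p' : List ℕ) (C C' : F) (b : Bool) : Prop :=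
  ∃ (hp : p ∈ T.dom) (i : ℕ), p' = p ++ [i] ∧
    D.trace (T.rule p hp) i C C' ∧ (b = true → D.prog (T.rule p hp) i C C')

def IPath.hasInfTrace {T : IPreProof D} (π : IPath T) : Prop :=
  ∃ (k : ℕ) (C : ℕ → F) (b : ℕ → Bool),
    (∀ n, k ≤ n → T.tstep (π.pos n) (π.pos (n + 1)) (C n) (C (n + 1)) (b n)) ∧
    (∀ m, ∃ n, m ≤ n ∧ b n = true)

/-- The global trace condition for infinitary pre-proofs. -/
def IPreProof.GTC (T : IPreProof D) : Prop := ∀ π : IPath T, π.hasInfTrace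

def IPreProof.namesUsed (T : IPreProof D) : Set N :=
  {ν | ∃ (p : List ℕ) (hp : p ∈ T.dom), D.name (T.rule p hp) = ν}

def IPreProof.Theta (T : IPreProof D) : Set Sb :=
  {s | ∃ (p : List ℕ) (hp : p ∈ T.dom), s ∈ D.substs (T.rule p hp)}
/-! ### The rules of `CLKID^ω` and `LKID^ω` -/

inductive RuleName : Type where
  | ax | wk | cut | subst
  | notL | notR | orL | orR | andL | andR | impL | impR
  | allL | allR | exL | exR | eqL | eqR | ul | ur
  | freshL | frame
  deriving DecidableEq

/-- The substitution `[t/x, u/y]`. -/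
def subst2 (x y : ℕ) (t u : Term S) : Subst S :=
  fun z => if z = x then t else if z = y then u else Term.fvar z

/-- Rule instances of `CLKID^ω`/`LKID^ω` (plus the extra rule `(fresh L)`,
which is *not* counted among the `CLKID^ω` rules; see `clkidNames`). -/
inductive RuleApp {S : Signature} (Φ : Finset (Production S)) :
    GSequent (Formula S) → List (GSequent (Formula S)) → Type where
  | ax (Γ Δ : Finset (Formula S)) (h : (Γ ∩ Δ).Nonempty) :
      RuleApp Φ (Γ, Δ) []
  | wk (Γ Δ Γ' Δ' : Finset (Formula S)) (h1 : Γ' ⊆ Γ) (h2 : Δ' ⊆ Δ) :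
      RuleApp Φ (Γ, Δ) [(Γ', Δ')]
  | cut (Γ Δ : Finset (Formula S)) (φ : Formula S) :
      RuleApp Φ (Γ, Δ) [(Γ, insert φ Δ), (insert φ Γ, Δ)]
  | substR (Γ Δ : Finset (Formula S)) (θ : Subst S) (hθ : (Subst.dom θ).Finite) :
      RuleApp Φ (Γ.image (Formula.subst · θ), Δ.image (Formula.subst · θ)) [(Γ, Δ)]
  | notL (Γ Δ : Finset (Formula S)) (φ : Formula S) :
      RuleApp Φ (insert (Formula.not φ) Γ, Δ) [(Γ, insert φ Δ)]
  | notR (Γ Δ : Finset (Formula S)) (φ : Formula S) :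
      RuleApp Φ (Γ, insert (Formula.not φ) Δ) [(insert φ Γ, Δ)]
  | orL (Γ Δ : Finset (Formula S)) (φ ψ : Formula S) :
      RuleApp Φ (insert (Formula.or φ ψ) Γ, Δ) [(insert φ Γ, Δ), (insert ψ Γ, Δ)]
  | orR (Γ Δ : Finset (Formula S)) (φ ψ : Formula S) :
      RuleApp Φ (Γ, insert (Formula.or φ ψ) Δ) [(Γ, insert φ (insert ψ Δ))]
  | andL (Γ Δ : Finset (Formula S)) (φ ψ : Formula S) :
      RuleApp Φ (insert (Formula.and φ ψ) Γ, Δ) [(insert φ (insert ψ Γ), Δ)]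
  | andR (Γ Δ : Finset (Formula S)) (φ ψ : Formula S) :
      RuleApp Φ (Γ, insert (Formula.and φ ψ) Δ) [(Γ, insert φ Δ), (Γ, insert ψ Δ)]
  | impL (Γ Δ : Finset (Formula S)) (φ ψ : Formula S) :
      RuleApp Φ (insert (Formula.imp φ ψ) Γ, Δ) [(Γ, insert φ Δ), (insert ψ Γ, Δ)]
  | impR (Γ Δ : Finset (Formula S)) (φ ψ : Formula S) :
      RuleApp Φ (Γ, insert (Formula.imp φ ψ) Δ) [(insert φ Γ, insert ψ Δ)]
  | allL (Γ Δ : Finset (Formula S)) (φ : Formula S) (t : Term S) :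
      RuleApp Φ (insert (Formula.all φ) Γ, Δ) [(insert (φ.openF 0 t) Γ, Δ)]
  | allR (Γ Δ : Finset (Formula S)) (φ : Formula S) (y : ℕ)
      (hy : y ∉ fvSeq ((Γ, insert (Formula.all φ) Δ) : GSequent (Formula S))) :
      RuleApp Φ (Γ, insert (Formula.all φ) Δ) [(Γ, insert (φ.openF 0 (Term.fvar y)) Δ)]
  | exL (Γ Δ : Finset (Formula S)) (φ : Formula S) (y : ℕ)
      (hy : y ∉ fvSeq ((insert (Formula.ex φ) Γ, Δ) : GSequent (Formula S))) :
      RuleApp Φ (insert (Formula.ex φ) Γ, Δ) [(insert (φ.openF 0 (Term.fvar y)) Γ, Δ)]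
  | exR (Γ Δ : Finset (Formula S)) (φ : Formula S) (t : Term S) :
      RuleApp Φ (Γ, insert (Formula.ex φ) Δ) [(Γ, insert (φ.openF 0 t) Δ)]
  | eqL (Γ Δ : Finset (Formula S)) (x y : ℕ) (t u : Term S) :
      RuleApp Φ
        (insert (Formula.eq t u) (Γ.image (Formula.subst · (subst2 x y t u))),
         Δ.image (Formula.subst · (subst2 x y t u)))
        [(Γ.image (Formula.subst · (subst2 x y u t)),
          Δ.image (Formula.subst · (subst2 x y u t)))]
  | eqR (Γ Δ : Finset (Formula S)) (t : Term S) :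
      RuleApp Φ (Γ, insert (Formula.eq t t) Δ) []
  | ul (Γ Δ : Finset (Formula S)) (P : S.IndPred) (u : Fin (S.indArity P) → Term S)
      (prods : List (Production S)) (σs : List (Subst S))
      (hlen : prods.length = σs.length) (hnd : prods.Nodup)
      (hall : ∀ pr : Production S, pr ∈ prods ↔ pr ∈ Φ ∧ pr.pred = P)
      (hfresh : ∀ pσ ∈ prods.zip σs,
        Freshening pσ.2 pσ.1
          (fvSeq ((insert (Formula.ind P u) Γ, Δ) : GSequent (Formula S)))) :
      RuleApp Φ (insert (Formula.ind P u) Γ, Δ)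
        ((prods.zip σs).map (fun pσ => caseDist Γ Δ P u pσ.1 pσ.2))
  | ur (Γ Δ : Finset (Formula S)) (pr : Production S) (hpr : pr ∈ Φ) (σ : Subst S) :
      RuleApp Φ (Γ, insert (Formula.ind pr.pred (fun i => Term.subst (pr.args i) σ)) Δ)
        ((pr.ordPrems.map (fun q => (Γ, insert (Formula.ord q.1 (fun i => Term.subst (q.2 i) σ)) Δ)))
          ++ (pr.indPrems.map (fun p => (Γ, insert (Formula.ind p.1 (fun i => Term.subst (p.2 i) σ)) Δ))))
  | freshL (Γ Δ : Finset (Formula S)) (y : ℕ) (t : Term S)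
      (hy : y ∉ fvSeq ((Γ, Δ) : GSequent (Formula S)) ∧ y ∉ Term.fv t) :
      RuleApp Φ (Γ, Δ) [(insert (Formula.eq (Term.fvar y) t) Γ, Δ)]

variable {Φ : Finset (Production S)}

def RuleApp.name : {c : GSequent (Formula S)} → {ps : List (GSequent (Formula S))} →
    RuleApp Φ c ps → RuleName
  | _, _, .ax .. => .ax
  | _, _, .wk .. => .wk
  | _, _, .cut .. => .cut
  | _, _, .substR .. => .subst
  | _, _, .notL .. => .notL
  | _, _, .notR .. => .notR
  | _, _, .orL .. => .orL
  | _, _, .orR .. => .orR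
  | _, _, .andL .. => .andL
  | _, _, .andR .. => .andR
  | _, _, .impL .. => .impL
  | _, _, .impR .. => .impR
  | _, _, .allL .. => .allL
  | _, _, .allR .. => .allR
  | _, _, .exL .. => .exL
  | _, _, .exR .. => .exR
  | _, _, .eqL .. => .eqL
  | _, _, .eqR .. => .eqR
  | _, _, .ul .. => .ul
  | _, _, .ur .. => .ur
  | _, _, .freshL .. => .freshL

def RuleApp.substsOf : {c : GSequent (Formula S)} → {ps : List (GSequent (Formula S))} →
    RuleApp Φ c ps → Set (Subst S)
  | _, _, .substR _ _ θ _ => {θ}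
  | _, _, _ => ∅

/-- The "corresponding occurrence" relation of a rule instance: how an
inductive-predicate occurrence in the antecedent of the conclusion relates to
one in the antecedent of the `k`-th premise. -/
def RuleApp.core : {c : GSequent (Formula S)} → {ps : List (GSequent (Formula S))} →
    RuleApp Φ c ps → ℕ → Formula S → Formula S → Prop
  | _, _, .substR _ _ θ _ => fun _ C C' => C = Formula.subst C' θ
  | _, _, .eqL Γ _ x y t u => fun _ C C' =>
      ∃ ψ ∈ Γ, C = Formula.subst ψ (subst2 x y t u) ∧ C' = Formula.subst ψ (subst2 x y u t)
  | _, _, .ul _ _ P u prods σs _ _ _ _ => fun k C C' =>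
      (C ≠ Formula.ind P u ∧ C' = C) ∨
      (C = Formula.ind P u ∧ ∃ h : k < (prods.zip σs).length,
        ∃ pp ∈ ((prods.zip σs).get ⟨k, h⟩).1.indPrems,
          C' = Formula.ind pp.1 (fun i => Term.subst (pp.2 i) ((prods.zip σs).get ⟨k, h⟩).2))
  | _, _, _ => fun _ C C' => C' = C

/-- The progressing case: at `(UL)`, the traced occurrence is the unfolded one. -/
def RuleApp.progCore : {c : GSequent (Formula S)} → {ps : List (GSequent (Formula S))} →
    RuleApp Φ c ps → ℕ → Formula S → Formula S → Prop
  | _, _, .ul _ _ P u prods σs _ _ _ _ => fun k C C' =>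
      C = Formula.ind P u ∧ ∃ h : k < (prods.zip σs).length,
        ∃ pp ∈ ((prods.zip σs).get ⟨k, h⟩).1.indPrems,
          C' = Formula.ind pp.1 (fun i => Term.subst (pp.2 i) ((prods.zip σs).get ⟨k, h⟩).2)
  | _, _, _ => fun _ _ _ => False

/-- A trace step along a rule instance, into its `k`-th premise. -/
def RuleApp.traceStep {c : GSequent (Formula S)} {ps : List (GSequent (Formula S))}
    (r : RuleApp Φ c ps) (k : ℕ) (C C' : Formula S) : Prop :=
  C ∈ c.1 ∧ Formula.IsInd C ∧ Formula.IsInd C' ∧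
  (∃ h : k < ps.length, C' ∈ (ps.get ⟨k, h⟩).1) ∧ RuleApp.core r k C C'

/-- A progressing trace step. -/
def RuleApp.progStep {c : GSequent (Formula S)} {ps : List (GSequent (Formula S))}
    (r : RuleApp Φ c ps) (k : ℕ) (C C' : Formula S) : Prop :=
  RuleApp.traceStep r k C C' ∧ RuleApp.progCore r k C C'

/-- The derivation system of `CLKID^ω` and `LKID^ω` (cyclic pre-proofs of
`CLKID^ω` are `CPreProof (CLKID S Φ)`, infinitary pre-proofs of `LKID^ω` are
`IPreProof (CLKID S Φ)`). -/
noncomputable def CLKID (S : Signature) (Φ : Finset (Production S)) :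
    DerivSystem (GSequent (Formula S)) (Formula S) RuleName (Subst S) where
  App := RuleApp Φ
  name := fun r => RuleApp.name r
  trace := fun r k C C' => RuleApp.traceStep r k C C'
  prog := fun r k C C' => RuleApp.progStep r k C C'
  substs := fun r => RuleApp.substsOf r
  inAnt := fun e C => C ∈ e.1 ∧ Formula.IsInd C

/-- The names of the genuine `CLKID^ω` rules: everything except the extra
rule `(fresh L)` (and the separation-logic frame rule name). -/
def clkidNames : Set RuleName := {ν | ν ≠ RuleName.freshL ∧ ν ≠ RuleName.frame}

/-- The free variables of a cyclic pre-proof. -/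
def CPreProof.FVc (T : CPreProof (CLKID S Φ)) : Set ℕ :=
  {x | ∃ p ∈ T.dom, x ∈ fvSeq (T.seq p)}

/-- The free variables of an infinitary pre-proof. -/
def IPreProof.FVi (T : IPreProof (CLKID S Φ)) : Set ℕ :=
  {x | ∃ p ∈ T.dom, x ∈ fvSeq (T.seq p)}

namespace TreeUnfold

variable {Q F N Sb : Type} {D : DerivSystem Q F N Sb}

/-- stack of (Subst)-free unfolding map: `fTgo` on reversed positions. -/
def fTgo (T : CPreProof D) : List ℕ → List ℕ
  | [] => []
  | j :: r => T.resolve (fTgo T r ++ [j])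

def fT (T : CPreProof D) (p : List ℕ) : List ℕ := fTgo T p.reverse

theorem fT_nil (T : CPreProof D) : fT T [] = [] := rfl

theorem fT_snoc (T : CPreProof D) (p : List ℕ) (j : ℕ) :
    fT T (p ++ [j]) = T.resolve (fT T p ++ [j]) := by
  simp [fT, fTgo]

theorem resolve_spec (T : CPreProof D) {q : List ℕ} (hq : q ∈ T.dom) :
    T.resolve q ∈ T.dom ∧ T.bud (T.resolve q) = false ∧ T.seq (T.resolve q) = T.seq q := by
  unfold CPreProof.resolve
  cases h : T.bud q with
  | false => simp [hq, h]
  | true => simp [h, T.comp_mem q hq h, T.comp_not_bud q hq h, T.comp_seq q hq h]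

theorem mem_singleton_of_mem (T : CPreProof D) :
    ∀ q, q ∈ T.dom → q ≠ [] → ∃ i, [i] ∈ T.dom := by
  intro q
  induction q using List.reverseRecOn with
  | nil => intro _ h; exact absurd rfl h
  | append_singleton q' i ih =>
    intro hq _
    rcases eq_or_ne q' [] with h | h
    · subst h; exact ⟨i, by simpa using hq⟩
    · exact ih (T.down q' i hq) h

theorem root_not_bud (T : CPreProof D) : T.bud [] = false := by
  by_contra h
  rw [Bool.not_eq_false] at h
  have hc := T.comp_mem [] T.root_mem h
  have hcb := T.comp_not_bud [] T.root_mem h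
  have hne : T.comp [] ≠ [] := by
    intro he; rw [he, h] at hcb; exact absurd hcb (by simp)
  obtain ⟨i, hi⟩ := mem_singleton_of_mem T (T.comp []) hc hne
  exact T.bud_leaf [] T.root_mem h i (by simpa using hi)

inductive UD (T : CPreProof D) : List ℕ → Prop
  | nil : UD T []
  | snoc {p : List ℕ} {j : ℕ} (h : UD T p) (hm : fT T p ∈ T.dom)
      (hb : T.bud (fT T p) = false) (hj : j < (T.prems (fT T p)).length) :
      UD T (p ++ [j])

theorem UD_inv {T : CPreProof D} {p : List ℕ} (h : UD T p) :
    fT T p ∈ T.dom ∧ T.bud (fT T p) = false := by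
  induction h with
  | nil => exact ⟨T.root_mem, root_not_bud T⟩
  | snoc h hm hb hj ih =>
    rw [fT_snoc]
    have hmem := (T.child_mem _ hm hb _).2 hj
    obtain ⟨a, b, _⟩ := resolve_spec T hmem
    exact ⟨a, b⟩

theorem snoc_inj {p q : List ℕ} {i j : ℕ} (h : p ++ [i] = q ++ [j]) : p = q ∧ i = j := by
  have h1 := congrArg List.reverse h
  simp at h1
  exact ⟨h1.2, h1.1⟩

theorem UD_snoc_inv {T : CPreProof D} {p : List ℕ} {j : ℕ} (h : UD T (p ++ [j])) :
    UD T p ∧ j < (T.prems (fT T p)).length := by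
  generalize hq : p ++ [j] = q at h
  cases h with
  | nil => simp at hq
  | snoc h hm hb hj =>
    obtain ⟨h1, h2⟩ := snoc_inj hq
    subst h1; subst h2
    exact ⟨h, hj⟩

noncomputable def Utree (T : CPreProof D) : IPreProof D where
  dom := {p | UD T p}
  root_mem := UD.nil
  down := fun p i h => (UD_snoc_inv h).1
  seq := fun p => T.seq (fT T p)
  prems := fun p => T.prems (fT T p)
  rule := fun p hp => T.rule (fT T p) (UD_inv hp).1 (UD_inv hp).2
  child_mem := fun p hp i =>
    ⟨fun h => (UD_snoc_inv h).2,
     fun h => UD.snoc hp (UD_inv hp).1 (UD_inv hp).2 h⟩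
  child_seq := fun p hp i h => by
    show T.seq (fT T (p ++ [i])) = _
    rw [fT_snoc]
    have hm := (T.child_mem (fT T p) (UD_inv hp).1 (UD_inv hp).2 i).2 h
    rw [(resolve_spec T hm).2.2]
    exact T.child_seq (fT T p) (UD_inv hp).1 (UD_inv hp).2 i h

theorem surj (T : CPreProof D) : ∀ q ∈ T.dom, ∃ p, UD T p ∧ fT T p = T.resolve q := by
  intro q
  induction q using List.reverseRecOn with
  | nil =>
    intro _
    exact ⟨[], UD.nil, by simp [fT_nil, CPreProof.resolve, root_not_bud T]⟩
  | append_singleton q' i ih =>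
    intro hq
    have hq' := T.down q' i hq
    obtain ⟨p₀, hp₀, hf₀⟩ := ih hq'
    have hb : T.bud q' = false := by
      by_contra hb'
      rw [Bool.not_eq_false] at hb'
      exact T.bud_leaf q' hq' hb' i hq
    have hres : T.resolve q' = q' := by simp [CPreProof.resolve, hb]
    rw [hres] at hf₀
    have hi : i < (T.prems q').length := (T.child_mem q' hq' hb i).1 hq
    refine ⟨p₀ ++ [i], UD.snoc hp₀ (by rw [hf₀]; exact hq') (by rw [hf₀]; exact hb)
      (by rw [hf₀]; exact hi), ?_⟩
    rw [fT_snoc, hf₀]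

/-! timing machinery -/

def tauF (B : ℕ → Bool) : ℕ → ℕ
  | 0 => 0
  | n + 1 => tauF B n + (if B n then 2 else 1)

theorem tau_succ (B : ℕ → Bool) (n : ℕ) :
    tauF B (n + 1) = tauF B n + (if B n then 2 else 1) := rfl

theorem tau_succ_true (B : ℕ → Bool) (n : ℕ) (h : B n = true) :
    tauF B (n + 1) = tauF B n + 2 := by rw [tau_succ, h]; simp

theorem tau_succ_false (B : ℕ → Bool) (n : ℕ) (h : B n = false) :
    tauF B (n + 1) = tauF B n + 1 := by rw [tau_succ, h]; simp

theorem tau_strict (B : ℕ → Bool) : StrictMono (tauF B) :=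
  strictMono_nat_of_lt_succ (fun n => by rw [tau_succ]; split <;> omega)

theorem tau_le (B : ℕ → Bool) (n : ℕ) : n ≤ tauF B n := by
  induction n with
  | zero => exact Nat.zero_le _
  | succ n ih => rw [tau_succ]; split <;> omega

def stF (B : ℕ → Bool) : ℕ → ℕ × Bool
  | 0 => (0, false)
  | m + 1 =>
    let s := stF B m
    if s.2 then (s.1 + 1, false) else if B s.1 then (s.1, true) else (s.1 + 1, false)

theorem st_tau (B : ℕ → Bool) : ∀ n, stF B (tauF B n) = (n, false) := by
  intro n
  induction n with
  | zero => rfl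
  | succ n ih =>
    cases hB : B n with
    | false =>
      rw [tau_succ_false B n hB]
      simp [stF, ih, hB]
    | true =>
      rw [tau_succ_true B n hB]
      have h2 : tauF B n + 2 = tauF B n + 1 + 1 := by omega
      rw [h2]
      simp [stF, ih, hB]

theorem st_bud (B : ℕ → Bool) (n : ℕ) (hB : B n = true) :
    stF B (tauF B n + 1) = (n, true) := by
  simp [stF, st_tau, hB]

theorem times_class (B : ℕ → Bool) :
    ∀ m, ∃ n, m = tauF B n ∨ (B n = true ∧ m = tauF B n + 1) := by
  intro m
  induction m with
  | zero => exact ⟨0, Or.inl rfl⟩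
  | succ m ih =>
    obtain ⟨n, h | ⟨hB, h⟩⟩ := ih
    · cases hB : B n with
      | true => exact ⟨n, Or.inr ⟨hB, by omega⟩⟩
      | false => exact ⟨n + 1, Or.inl (by rw [tau_succ_false B n hB]; omega)⟩
    · exact ⟨n + 1, Or.inl (by rw [tau_succ_true B n hB]; omega)⟩

def posF (pp : ℕ → List ℕ) (idx : ℕ → ℕ) (B : ℕ → Bool) (m : ℕ) : List ℕ :=
  if (stF B m).2 then pp (stF B m).1 ++ [idx (stF B m).1] else pp (stF B m).1

theorem Utree_GTC (T : CPreProof D) (hGTC : T.GTC) : (Utree T).GTC := by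
  intro π
  obtain ⟨idx, h1, h2⟩ : ∃ idx : ℕ → ℕ, (∀ n, π.pos (n + 1) = π.pos n ++ [idx n]) ∧
      (∀ n, π.pos n ++ [idx n] ∈ (Utree T).dom) := by
    choose idx ha hb using π.step; exact ⟨idx, ha, hb⟩
  set pp : ℕ → List ℕ := fun n => fT T (π.pos n) with hppdef
  have hmemU : ∀ n, UD T (π.pos n) := π.mem
  have hmem : ∀ n, pp n ∈ T.dom := fun n => (UD_inv (hmemU n)).1
  have hnb : ∀ n, T.bud (pp n) = false := fun n => (UD_inv (hmemU n)).2
  have hlt : ∀ n, idx n < (T.prems (pp n)).length := fun n => by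
    have h := hmemU (n + 1); rw [h1 n] at h; exact (UD_snoc_inv h).2
  have hchild : ∀ n, pp n ++ [idx n] ∈ T.dom := fun n =>
    (T.child_mem (pp n) (hmem n) (hnb n) (idx n)).2 (hlt n)
  set B : ℕ → Bool := fun n => T.bud (pp n ++ [idx n]) with hBdef
  have hBval : ∀ n, T.bud (pp n ++ [idx n]) = B n := fun n => rfl
  have hppn : ∀ n, pp (n + 1) = T.resolve (pp n ++ [idx n]) := fun n => by
    show fT T (π.pos (n + 1)) = _; rw [h1 n, fT_snoc]
  have hpos_child : ∀ n, B n = false → pp (n + 1) = pp n ++ [idx n] := fun n hb => by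
    have hb' : T.bud (pp n ++ [idx n]) = false := by rw [hBval n]; exact hb
    rw [hppn n]; simp [CPreProof.resolve, hb']
  have hpos_comp : ∀ n, B n = true → pp (n + 1) = T.comp (pp n ++ [idx n]) := fun n hb => by
    have hb' : T.bud (pp n ++ [idx n]) = true := by rw [hBval n]; exact hb
    rw [hppn n]; simp [CPreProof.resolve, hb']
  -- positions at special times
  have hpos_tau : ∀ n, posF pp idx B (tauF B n) = pp n := fun n => by
    simp [posF, st_tau]
  have hpos_tau1 : ∀ n, posF pp idx B (tauF B n + 1) = pp n ++ [idx n] := fun n => by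
    cases hBn : B n with
    | true => simp [posF, st_bud B n hBn]
    | false =>
      have he : tauF B n + 1 = tauF B (n + 1) := by rw [tau_succ_false B n hBn]
      rw [he, hpos_tau, hpos_child n hBn]
  have hmemP : ∀ m, posF pp idx B m ∈ T.dom := by
    intro m
    obtain ⟨n, hm | ⟨hBn, hm⟩⟩ := times_class B m
    · subst hm; rw [hpos_tau]; exact hmem n
    · subst hm; rw [hpos_tau1]; exact hchild n
  have hstepP : ∀ m,
      (T.bud (posF pp idx B m) = true ∧ posF pp idx B (m + 1) = T.comp (posF pp idx B m)) ∨
      (∃ i : ℕ, posF pp idx B (m + 1) = posF pp idx B m ++ [i] ∧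
          posF pp idx B m ++ [i] ∈ T.dom) := by
    intro m
    obtain ⟨n, hm | ⟨hBn, hm⟩⟩ := times_class B m
    · subst hm
      right
      exact ⟨idx n, by rw [hpos_tau, hpos_tau1], by rw [hpos_tau]; exact hchild n⟩
    · subst hm
      left
      have he : tauF B n + 1 + 1 = tauF B (n + 1) := by rw [tau_succ_true B n hBn]
      refine ⟨by rw [hpos_tau1]; rw [hBval n]; exact hBn, ?_⟩
      rw [he, hpos_tau, hpos_tau1, hpos_comp n hBn]
  obtain ⟨k, C, b, htr, hinf⟩ := hGTC ⟨posF pp idx B, hmemP, hstepP⟩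
  refine ⟨k, fun n => C (tauF B n), fun n => b (tauF B n), ?_, ?_⟩
  · intro n hn
    show (Utree T).tstep (π.pos n) (π.pos (n + 1)) (C (tauF B n)) (C (tauF B (n + 1)))
      (b (tauF B n))
    have hkn : k ≤ tauF B n := le_trans hn (tau_le B n)
    have ht0 := htr (tauF B n) hkn
    simp only [hpos_tau, hpos_tau1] at ht0
    rcases ht0 with ⟨hbud, _⟩ | ⟨hp, hb', i', heq, htrace, hprog⟩
    · rw [hnb n] at hbud; exact absurd hbud (by simp)
    · have hii : i' = idx n := ((snoc_inj heq).2).symm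
      subst hii
      cases hBn : B n with
      | false =>
        have he : tauF B (n + 1) = tauF B n + 1 := by rw [tau_succ_false B n hBn]
        refine ⟨π.mem n, idx n, h1 n, ?_, ?_⟩
        · rw [he]; exact htrace
        · rw [he]; exact hprog
      | true =>
        have he2 : tauF B n + 1 + 1 = tauF B (n + 1) := by rw [tau_succ_true B n hBn]
        have ht1 := htr (tauF B n + 1) (by omega)
        simp only [he2, hpos_tau1, hpos_tau] at ht1
        rcases ht1 with ⟨_, _, hCC, _, _⟩ | ⟨_, hb2, _, _, _, _⟩
        · refine ⟨π.mem n, idx n, h1 n, ?_, ?_⟩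
          · rw [hCC]; exact htrace
          · rw [hCC]; exact hprog
        · rw [hBval n, hBn] at hb2; exact absurd hb2 (by simp)
  · intro m
    obtain ⟨m', hm', hbm'⟩ := hinf (max (tauF B m) k)
    obtain ⟨n, hc | ⟨hBn, hc⟩⟩ := times_class B m'
    · refine ⟨n, ?_, ?_⟩
      · have hle : tauF B m ≤ tauF B n := by
          rw [← hc]; exact le_trans (le_max_left _ _) hm'
        exact (tau_strict B).le_iff_le.mp hle
      · show b (tauF B n) = true
        rw [← hc]; exact hbm'
    · exfalso
      subst hc
      have hk : k ≤ tauF B n + 1 := le_trans (le_max_right _ _) hm'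
      have ht1 := htr (tauF B n + 1) hk
      simp only [hpos_tau1, hpos_tau] at ht1
      rcases ht1 with ⟨_, _, _, _, hb0⟩ | ⟨_, hb2, _⟩
      · rw [hbm'] at hb0; exact absurd hb0 (by simp)
      · rw [hBval n, hBn] at hb2; exact absurd hb2 (by simp)

end TreeUnfold


/-- Tree unfolding: from `Pr₊ᵛᵃʳ` to `Pr^ω`. Let `Pr₊ᵛᵃʳ` be
a `CLKID^ω` proof of `Γ ⊢ Δ`. Then there exists an `LKID^ω` proof `Pr^ω` of
`Γ ⊢ Δ` with `FV(Pr^ω) = FV(Pr₊ᵛᵃʳ)` and `Θ(Pr^ω) = Θ(Pr₊ᵛᵃʳ)`, and a map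
`f^ω` from the sequent occurrences (node positions) of `Pr^ω` to those of
`Pr₊ᵛᵃʳ` such that: (i) the conclusion is mapped to the conclusion; (ii)
`f^ω(e)` is syntactically identical to `e`; (iii) every rule instance of
`Pr^ω` at `e` comes from an instance of the same rule at `f^ω(e)` in
`Pr₊ᵛᵃʳ` whose premises correspond (identifying each bud with its companion,
`f^ω` taking the companion), with every trace (and every progressing trace) in
the `Pr₊ᵛᵃʳ` instance preserved in the `Pr^ω` instance. -/
theorem tree_unfolding
    (S : Signature) (Φ : Finset (Production S))
    (Γ Δ : Finset (Formula S))
    (T : CPreProof (CLKID S Φ))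
    (hconc : T.seq [] = (Γ, Δ))
    (hnames : T.namesUsed ⊆ clkidNames)
    (hGTC : T.GTC) :
    ∃ (U : IPreProof (CLKID S Φ)) (f : List ℕ → List ℕ),
      U.seq [] = (Γ, Δ) ∧ U.GTC ∧ U.namesUsed ⊆ clkidNames ∧
      U.FVi = T.FVc ∧ U.Theta = T.Theta ∧
      f [] = [] ∧
      (∀ p (hp : p ∈ U.dom),
        ∃ (hf : f p ∈ T.dom) (hfb : T.bud (f p) = false),
          T.seq (f p) = U.seq p ∧
          (CLKID S Φ).name (T.rule (f p) hf hfb) = (CLKID S Φ).name (U.rule p hp) ∧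
          (T.prems (f p)).length = (U.prems p).length ∧
          (∀ j : ℕ, j < (U.prems p).length → f (p ++ [j]) = T.resolve (f p ++ [j])) ∧
          (∀ (j : ℕ) (C C' : Formula S),
            (CLKID S Φ).trace (T.rule (f p) hf hfb) j C C' →
            (CLKID S Φ).trace (U.rule p hp) j C C') ∧
          (∀ (j : ℕ) (C C' : Formula S),
            (CLKID S Φ).prog (T.rule (f p) hf hfb) j C C' →
            (CLKID S Φ).prog (U.rule p hp) j C C')) := by
  classical
  obtain U_def : True := trivial
  refine ⟨TreeUnfold.Utree T, TreeUnfold.fT T, ?_, TreeUnfold.Utree_GTC T hGTC, ?_, ?_, ?_, rfl, ?_⟩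
  · exact hconc
  · rintro ν ⟨p, hp, hname⟩
    exact hnames ⟨TreeUnfold.fT T p, (TreeUnfold.UD_inv hp).1, (TreeUnfold.UD_inv hp).2, hname⟩
  · ext x
    constructor
    · rintro ⟨p, hp, hx⟩
      exact ⟨TreeUnfold.fT T p, (TreeUnfold.UD_inv hp).1, hx⟩
    · rintro ⟨q, hq, hx⟩
      obtain ⟨p, hUD, hf⟩ := TreeUnfold.surj T q hq
      refine ⟨p, hUD, ?_⟩
      show x ∈ fvSeq (T.seq (TreeUnfold.fT T p))
      rw [hf, (TreeUnfold.resolve_spec T hq).2.2]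
      exact hx
  · ext s
    constructor
    · rintro ⟨p, hp, hs⟩
      exact ⟨TreeUnfold.fT T p, (TreeUnfold.UD_inv hp).1, (TreeUnfold.UD_inv hp).2, hs⟩
    · rintro ⟨q, hq, hb, hs⟩
      obtain ⟨p, hUD, hf⟩ := TreeUnfold.surj T q hq
      have hres : T.resolve q = q := by simp [CPreProof.resolve, hb]
      rw [hres] at hf
      subst hf
      exact ⟨p, hUD, hs⟩
  · intro p hp
    exact ⟨(TreeUnfold.UD_inv hp).1, (TreeUnfold.UD_inv hp).2, rfl, rfl, rfl,
      fun j _ => TreeUnfold.fT_snoc T p j, fun j C C' h => h, fun j C C' h => h⟩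

end CyclicProofs
end

section
/- (Closure of atomic substitutions) Let Θ_var be a finite set of atomic substitutions and X a finite set of variables. Then every substitution in the partial-substitution closure C_ps(Θ_var, X) is atomic, and C_ps(Θ_var, X) is a finite set. -/
set_option maxHeartbeats 1000000

namespace CyclicProofs

variable {S : Signature}

variable {Q F N Sb : Type}

variable {D : DerivSystem Q F N Sb}

variable {Φ : Finset (Production S)}

/-- Auxiliary: substituting an atomic substitution into an atomic term yields an atomic term. -/
theorem subst_atomic_atomic {S : Signature} {t : Term S} {θ : Subst S}
    (ht : t.IsAtomic) (hθ : Subst.Atomic θ) : (Term.subst t θ).IsAtomic := by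
  cases t with
  | fvar x => exact hθ x
  | bvar n => exact ht.elim
  | func f a => exact ht

/-- Closure of atomic substitutions. Let `Θ_var` be a finite
set of atomic substitutions and `X` a finite set of variables. Then every
substitution in the partial-substitution closure `C_ps(Θ_var, X)` is atomic,
and `C_ps(Θ_var, X)` is a finite set. -/
theorem cps_of_atomic_is_atomic_and_finite
    (S : Signature) (Θvar : Set (Subst S)) (X : Set ℕ)
    (hΘfin : Θvar.Finite) (hXfin : X.Finite)
    (hmaps : ∀ θ ∈ Θvar, (Subst.dom θ).Finite)
    (hatomic : ∀ θ ∈ Θvar, Subst.Atomic θ) :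
    (∀ θ : Subst S, Cps Θvar X θ → Subst.Atomic θ) ∧
    {θ : Subst S | Cps Θvar X θ}.Finite := by
  classical
  set D : Set ℕ := (⋃ θ ∈ Θvar, Subst.dom θ) ∪ X with hD
  have hDfin : D.Finite := Set.Finite.union (Set.Finite.biUnion hΘfin hmaps) hXfin
  set V : Set (Term S) := (⋃ θ ∈ Θvar, θ '' D) ∪ (Term.fvar '' (X ∪ D)) with hV
  have hVfin : V.Finite :=
    Set.Finite.union (Set.Finite.biUnion hΘfin (fun θ _ => hDfin.image θ))
      ((hXfin.union hDfin).image _)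
  have key : ∀ θ : Subst S, Cps Θvar X θ →
      Subst.Atomic θ ∧ (∀ x, x ∉ D → θ x = Term.fvar x) ∧ (∀ x ∈ D, θ x ∈ V) := by
    intro θ h
    induction h with
    | base hθ =>
      refine ⟨hatomic _ hθ, ?_, ?_⟩
      · intro x hx
        by_contra hne
        exact hx (Or.inl (Set.mem_biUnion hθ hne))
      · intro x hx
        exact Or.inl (Set.mem_biUnion hθ ⟨x, hx, rfl⟩)
    | @update θ' x y h hx hy ih =>
      obtain ⟨ha, hid, himg⟩ := ih
      refine ⟨?_, ?_, ?_⟩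
      · intro z
        unfold Subst.update
        split
        · trivial
        · exact ha z
      · intro z hz
        unfold Subst.update
        rw [if_neg, hid z hz]
        rintro rfl; exact hz (Or.inr hx)
      · intro z hz
        unfold Subst.update
        split
        · exact Or.inr ⟨_, Or.inl hy, rfl⟩
        · exact himg z hz
    | @comp θ₁ θ₂ h1 h2 ih1 ih2 =>
      obtain ⟨ha1, hid1, himg1⟩ := ih1
      obtain ⟨ha2, hid2, himg2⟩ := ih2
      refine ⟨fun x => subst_atomic_atomic (ha1 x) ha2, ?_, ?_⟩
      · intro x hx
        show Term.subst (θ₁ x) θ₂ = Term.fvar x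
        rw [hid1 x hx]
        show θ₂ x = Term.fvar x
        exact hid2 x hx
      · intro x hxD
        have hv := himg1 x hxD
        have hat := ha1 x
        show Term.subst (θ₁ x) θ₂ ∈ V
        cases hθ1x : θ₁ x with
        | fvar y =>
          show θ₂ y ∈ V
          by_cases hy : y ∈ D
          · exact himg2 y hy
          · rw [hid2 y hy, ← hθ1x]; exact hv
        | bvar n =>
          rw [hθ1x] at hat
          exact hat.elim
        | func f a =>
          rw [hθ1x] at hat hv
          have harity : S.arity f = 0 := hat
          have haeq : (fun i => Term.subst (a i) θ₂) = a := by
            funext i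
            exact (Fin.cast harity i).elim0
          show Term.func f (fun i => Term.subst (a i) θ₂) ∈ V
          rw [haeq]
          exact hv
  refine ⟨fun θ h => (key θ h).1, ?_⟩
  have hpi : (Set.pi (Set.univ : Set ↥hDfin.toFinset) (fun _ => V)).Finite :=
    Set.Finite.pi fun _ => hVfin
  have himg : (fun (θ : Subst S) (x : ↥hDfin.toFinset) => θ x) '' {θ | Cps Θvar X θ}
      ⊆ Set.pi Set.univ (fun _ => V) := by
    rintro _ ⟨θ, hθ, rfl⟩ x _
    exact (key θ hθ).2.2 x (hDfin.mem_toFinset.1 x.2)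
  refine Set.Finite.of_finite_image (hpi.subset himg) ?_
  intro θ1 h1 θ2 h2 heq
  funext x
  by_cases hx : x ∈ D
  · exact congrFun heq ⟨x, hDfin.mem_toFinset.2 hx⟩
  · rw [(key _ h1).2.1 x hx, (key _ h2).2.1 x hx]

end CyclicProofs
end

section
/- (Non-admissibility of substitution in a restricted cyclic system) Let P be the inductive predicate defined by the single production P(x) ⇐ P(sx), and consider the cyclic-proof system whose only inference rules are (UL′) (deriving P(x),Γ⊢Δ from P(sx),Γ⊢Δ), (UR), (Axiom), (Wk), and (Subst), with proofs required to satisfy the global trace condition. In this system the sequent P(x)⊢⊥ is provable, but it is not provable without the rule (Subst). -/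
set_option maxHeartbeats 1000000

namespace CyclicProofs

variable {S : Signature}

variable {Q F N Sb : Type}

variable {D : DerivSystem Q F N Sb}

variable {Φ : Finset (Production S)}

/-- The signature with a single unary function symbol `s` and a single unary
inductive predicate symbol `P`. -/
def sigP : Signature where
  Func := Unit
  arity := fun _ => 1
  OrdPred := Empty
  ordArity := fun q => q.elim
  IndPred := Unit
  indArity := fun _ => 1

/-- The term `s t`. -/
def sTerm (t : Term sigP) : Term sigP := Term.func () (fun _ => t)

/-- The atom `P(t)`. -/
def Pat (t : Term sigP) : Formula sigP := Formula.ind () (fun _ => t)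

/-- The rules of the restricted cyclic-proof system for the inductive
predicate `P` defined by the single production `P(x) ⇐ P(sx)`: only `(UL')`
(in-place left unfolding, without fresh variables and equalities), `(UR)`,
`(Axiom)`, `(Wk)` and `(Subst)`. -/
inductive RRule : GSequent (Formula sigP) → List (GSequent (Formula sigP)) → Type where
  | ax (Γ Δ : Finset (Formula sigP)) (h : (Γ ∩ Δ).Nonempty) : RRule (Γ, Δ) []
  | wk (Γ Δ Γ' Δ' : Finset (Formula sigP)) (h1 : Γ' ⊆ Γ) (h2 : Δ' ⊆ Δ) :
      RRule (Γ, Δ) [(Γ', Δ')]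
  | substR (Γ Δ : Finset (Formula sigP)) (θ : Subst sigP) (hθ : (Subst.dom θ).Finite) :
      RRule (Γ.image (Formula.subst · θ), Δ.image (Formula.subst · θ)) [(Γ, Δ)]
  | ul' (Γ Δ : Finset (Formula sigP)) (t : Term sigP) :
      RRule (insert (Pat t) Γ, Δ) [(insert (Pat (sTerm t)) Γ, Δ)]
  | ur' (Γ Δ : Finset (Formula sigP)) (t : Term sigP) :
      RRule (Γ, insert (Pat t) Δ) [(Γ, insert (Pat (sTerm t)) Δ)]

def RRule.rname : {c : GSequent (Formula sigP)} → {ps : List (GSequent (Formula sigP))} →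
    RRule c ps → RuleName
  | _, _, .ax .. => .ax
  | _, _, .wk .. => .wk
  | _, _, .substR .. => .subst
  | _, _, .ul' .. => .ul
  | _, _, .ur' .. => .ur

def RRule.core : {c : GSequent (Formula sigP)} → {ps : List (GSequent (Formula sigP))} →
    RRule c ps → ℕ → Formula sigP → Formula sigP → Prop
  | _, _, .substR _ _ θ _ => fun _ C C' => C = Formula.subst C' θ
  | _, _, .ul' _ _ t => fun _ C C' =>
      (C ≠ Pat t ∧ C' = C) ∨ (C = Pat t ∧ C' = Pat (sTerm t))
  | _, _, _ => fun _ C C' => C' = C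

def RRule.progCore : {c : GSequent (Formula sigP)} → {ps : List (GSequent (Formula sigP))} →
    RRule c ps → ℕ → Formula sigP → Formula sigP → Prop
  | _, _, .ul' _ _ t => fun _ C C' => C = Pat t ∧ C' = Pat (sTerm t)
  | _, _, _ => fun _ _ _ => False

def RRule.traceStep {c : GSequent (Formula sigP)} {ps : List (GSequent (Formula sigP))}
    (r : RRule c ps) (k : ℕ) (C C' : Formula sigP) : Prop :=
  C ∈ c.1 ∧ Formula.IsInd C ∧ Formula.IsInd C' ∧
  (∃ h : k < ps.length, C' ∈ (ps.get ⟨k, h⟩).1) ∧ RRule.core r k C C'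

/-- The restricted cyclic-proof system with rules `(UL')`, `(UR)`, `(Axiom)`,
`(Wk)` and `(Subst)`. -/
noncomputable def RSYS : DerivSystem (GSequent (Formula sigP)) (Formula sigP) RuleName (Subst sigP) where
  App := RRule
  name := fun r => RRule.rname r
  trace := fun r k C C' => RRule.traceStep r k C C'
  prog := fun r k C C' => RRule.traceStep r k C C' ∧ RRule.progCore r k C C'
  substs := fun {_ _} r => match r with
    | .substR _ _ θ _ => {θ}
    | _ => ∅
  inAnt := fun e C => C ∈ e.1 ∧ Formula.IsInd C

/-!
With `(Subst)`, unfold `P(x)` to `P(sx)` by `(UL')` and substitute `[sx/x]` back to `P(x)`: the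
resulting cycle progresses once per turn. Without `(Subst)`, every rule whose conclusion has an
empty succedent has a single premise with empty succedent, so the proof has an infinite path.
Along a trace on it the number of `s` in the traced atom never decreases and grows at every
progress point, yet it is bounded by the finitely many sequents of the proof.
-/

def Term.depth : Term sigP → ℕ
  | .func _ a => (a ⟨0, Nat.one_pos⟩).depth + 1
  | _ => 0

def Formula.depth : Formula sigP → ℕ
  | .ind _ a => (a ⟨0, Nat.one_pos⟩).depth
  | _ => 0

@[simp]
lemma Formula.depth_Pat (t : Term sigP) : (Pat t).depth = t.depth := rfl

@[simp]
lemma Term.depth_sTerm (t : Term sigP) : (sTerm t).depth = t.depth + 1 := rfl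

lemma RRule.traceStep_ul' (Γ Δ : Finset (Formula sigP)) (t : Term sigP) :
    (RRule.ul' Γ Δ t).traceStep 0 (Pat t) (Pat (sTerm t)) ∧
      (RRule.ul' Γ Δ t).progCore 0 (Pat t) (Pat (sTerm t)) :=
  ⟨⟨Finset.mem_insert_self _ _, trivial, trivial, ⟨by simp, Finset.mem_insert_self _ _⟩,
    Or.inr ⟨rfl, rfl⟩⟩, rfl, rfl⟩

lemma RRule.traceStep_substR {Γ Δ : Finset (Formula sigP)} {θ : Subst sigP}
    (hθ : (Subst.dom θ).Finite) {C : Formula sigP} (hC : C ∈ Γ) (hind : C.IsInd) :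
    (RRule.substR Γ Δ θ hθ).traceStep 0 (C.subst θ) C := by
  refine ⟨Finset.mem_image_of_mem _ hC, ?_, hind, ⟨by simp, hC⟩, rfl⟩
  cases C <;> exact hind

section LoopProof

variable (y : ℕ)

def succSubst : Subst sigP := Function.update Term.fvar y (sTerm (Term.fvar y))

lemma succSubst_dom_finite : (Subst.dom (succSubst y)).Finite := by
  refine (Set.finite_singleton y).subset fun z hz => ?_
  by_contra hzy
  exact hz (Function.update_of_ne hzy _ _)

@[simp]
lemma Pat_subst_succSubst :
    (Pat (Term.fvar y)).subst (succSubst y) = Pat (sTerm (Term.fvar y)) := by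
  simp [Pat, Formula.subst, Term.subst, succSubst]

def loopDom : Set (List ℕ) := {[], [0], [0, 0]}

/-- Node `[0]` carries the conclusion of `(Subst)` in its literal image form, so that
`loopRule` needs no casts; it equals `P(s y) ⊢` only propositionally. -/
noncomputable def loopSeq : List ℕ → GSequent (Formula sigP)
  | [] => (insert (Pat (Term.fvar y)) ∅, ∅)
  | [0] => (({Pat (Term.fvar y)} : Finset _).image (Formula.subst · (succSubst y)),
      (∅ : Finset (Formula sigP)).image (Formula.subst · (succSubst y)))
  | _ => ({Pat (Term.fvar y)}, ∅)

noncomputable def loopPrems : List ℕ → List (GSequent (Formula sigP))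
  | [] => [(insert (Pat (sTerm (Term.fvar y))) ∅, ∅)]
  | [0] => [({Pat (Term.fvar y)}, ∅)]
  | _ => []

def loopBud (p : List ℕ) : Bool := p = [0, 0]

def loopRule :
    (p : List ℕ) → p ∈ loopDom → loopBud p = false → RRule (loopSeq y p) (loopPrems y p)
  | [], _, _ => .ul' ∅ ∅ (Term.fvar y)
  | [0], _, _ => .substR {Pat (Term.fvar y)} ∅ (succSubst y) (succSubst_dom_finite y)
  | [0, 0], _, hb => absurd hb (by decide)
  | [_ + 1], hp, _ | [0, _ + 1], hp, _ | [_ + 1, _], hp, _ | _ :: _ :: _ :: _, hp, _ =>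
    absurd hp (by simp [loopDom])

lemma mem_loopDom {p : List ℕ} : p ∈ loopDom ↔ p = [] ∨ p = [0] ∨ p = [0, 0] := Iff.rfl

noncomputable def loopProof : CPreProof RSYS where
  dom := loopDom
  fin := by simp [loopDom]
  root_mem := by simp [loopDom]
  down := by
    intro p i h
    rcases p with _ | ⟨a, _ | ⟨b, p⟩⟩ <;> simp_all [loopDom]
  seq := loopSeq y
  prems := loopPrems y
  bud := loopBud
  rule := loopRule y
  child_mem := by
    rintro p (rfl | rfl | rfl) hb i <;> simp_all [loopDom, loopPrems, loopBud]
  child_seq := by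
    rintro p (rfl | rfl | rfl) hb (_ | i) h <;> simp [loopBud, loopPrems, loopSeq] at hb h ⊢
  bud_leaf := by
    rintro p (rfl | rfl | rfl) hb i <;> simp_all [loopDom, loopBud]
  comp _ := []
  comp_mem _ _ _ := by simp [loopDom]
  comp_not_bud _ _ _ := rfl
  comp_seq := by
    rintro p (rfl | rfl | rfl) hb <;> simp_all [loopBud, loopSeq]

def loopNext : List ℕ → List ℕ
  | [] => [0]
  | [0] => [0, 0]
  | _ => []

def loopToken : List ℕ → Formula sigP
  | [0] => Pat (sTerm (Term.fvar y))
  | _ => Pat (Term.fvar y)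

lemma loopProof_pos_succ (π : CPath (loopProof y)) (n : ℕ) :
    π.pos (n + 1) = loopNext (π.pos n) := by
  rcases π.step n with ⟨hb, hcomp⟩ | ⟨i, hnext, hi⟩
  · have hbud : π.pos n = [0, 0] := by simpa [loopProof, loopBud] using hb
    rw [hcomp, hbud]
    rfl
  · rw [hnext]
    rcases mem_loopDom.mp (π.mem n) with h | h | h <;> rw [h] at hi ⊢ <;>
      simp_all [loopProof, loopDom, loopNext]

lemma loopProof_tstep {p : List ℕ} (hp : p ∈ loopDom) :
    (loopProof y).tstep p (loopNext p) (loopToken y p) (loopToken y (loopNext p)) (p = []) := by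
  have hx : Formula.IsInd (Pat (Term.fvar y)) := trivial
  rcases hp with rfl | rfl | rfl
  · refine Or.inr ⟨by simp [loopProof, loopDom], rfl, 0, rfl, ?_, fun _ => ?_⟩
    · exact (RRule.traceStep_ul' ∅ ∅ (Term.fvar y)).1
    · exact RRule.traceStep_ul' ∅ ∅ (Term.fvar y)
  · refine Or.inr ⟨by simp [loopProof, loopDom], rfl, 0, rfl, ?_, by simp⟩
    have := RRule.traceStep_substR (Δ := ∅) (succSubst_dom_finite y)
      (Finset.mem_singleton_self _) hx
    rwa [Pat_subst_succSubst] at this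
  · exact Or.inl ⟨rfl, rfl, rfl, ⟨Finset.mem_singleton_self _, hx⟩, by simp⟩

theorem loopProof_gtc : (loopProof y).GTC := by
  intro π
  refine ⟨0, fun n => loopToken y (π.pos n), fun n => π.pos n = [], fun n _ => ?_, fun m => ?_⟩
  · simpa only [loopProof_pos_succ] using loopProof_tstep y (π.mem n)
  · have h1 := loopProof_pos_succ y π m
    have h2 := loopProof_pos_succ y π (m + 1)
    rcases mem_loopDom.mp (π.mem m) with h | h | h
    · exact ⟨m, le_rfl, by simp [h]⟩
    · exact ⟨m + 2, by omega, by simp [h2, h1, h, loopNext]⟩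
    · exact ⟨m + 1, by omega, by simp [h1, h, loopNext]⟩

lemma provableWith_Pat_fvar : RSYS.ProvableWith Set.univ ({Pat (Term.fvar y)}, ∅) :=
  ⟨loopProof y, by simp [loopProof, loopSeq], loopProof_gtc y, Set.subset_univ _⟩

end LoopProof

lemma exists_gt_of_monotone_of_frequently_lt {u : ℕ → ℕ} (hu : Monotone u)
    (h : ∀ m, ∃ n, m ≤ n ∧ u n < u (n + 1)) (B : ℕ) : ∃ n, B < u n := by
  induction B with
  | zero =>
    obtain ⟨n, -, hn⟩ := h 0
    exact ⟨n + 1, by omega⟩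
  | succ B ih =>
    obtain ⟨m, hm⟩ := ih
    obtain ⟨n, hmn, hn⟩ := h m
    exact ⟨n + 1, by have := hu hmn; omega⟩

theorem CPreProof.nonempty_cPath_of_invariant (T : CPreProof D) (good : List ℕ → Prop)
    (h0 : good [])
    (hsucc : ∀ p ∈ T.dom, good p → ∃ q, good q ∧
      ((T.bud p = true ∧ q = T.comp p) ∨ ∃ i, q = p ++ [i] ∧ p ++ [i] ∈ T.dom)) :
    Nonempty (CPath T) := by
  have hnext : ∀ v : {p // p ∈ T.dom ∧ good p}, ∃ w : {p // p ∈ T.dom ∧ good p},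
      (T.bud v.1 = true ∧ w.1 = T.comp v.1) ∨ ∃ i, w.1 = v.1 ++ [i] ∧ v.1 ++ [i] ∈ T.dom := by
    rintro ⟨p, hp, hgood⟩
    obtain ⟨q, hq, hstep⟩ := hsucc p hp hgood
    have hqdom : q ∈ T.dom := by
      rcases hstep with ⟨hb, rfl⟩ | ⟨i, rfl, hi⟩
      exacts [T.comp_mem p hp hb, hi]
    exact ⟨⟨q, hqdom, hq⟩, hstep⟩
  choose next hnext using hnext
  let v : ℕ → {p // p ∈ T.dom ∧ good p} := fun n => next^[n] ⟨[], T.root_mem, h0⟩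
  refine ⟨⟨fun n => (v n).1, fun n => (v n).2.1, fun n => ?_⟩⟩
  simp only [v, Function.iterate_succ_apply']
  exact hnext _

section SubstFree

lemma RRule.premises_eq_of_succedent_eq_empty {c : GSequent (Formula sigP)}
    {ps : List (GSequent (Formula sigP))} (r : RRule c ps) (hname : r.rname ≠ .subst)
    (h : c.2 = ∅) : ∃ Γ', ps = [(Γ', ∅)] := by
  cases r with
  | ax Γ Δ hΓΔ =>
    obtain rfl : Δ = ∅ := h
    simp at hΓΔ
  | wk Γ Δ Γ' Δ' _ hΔ =>
    obtain rfl : Δ = ∅ := h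
    exact ⟨Γ', by rw [Finset.subset_empty.mp hΔ]⟩
  | substR => exact absurd rfl hname
  | ul' Γ Δ t =>
    obtain rfl : Δ = ∅ := h
    exact ⟨_, rfl⟩
  | ur' Γ Δ t => simp at h

lemma RRule.depth_le_of_core {c : GSequent (Formula sigP)} {ps : List (GSequent (Formula sigP))}
    (r : RRule c ps) (hname : r.rname ≠ .subst) {i : ℕ} {C C' : Formula sigP}
    (h : r.core i C C') : C.depth ≤ C'.depth ∧ (r.progCore i C C' → C.depth < C'.depth) := by
  cases r with
  | substR => exact absurd rfl hname
  | ul' Γ Δ t =>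
    rcases h with ⟨hne, rfl⟩ | ⟨rfl, rfl⟩
    · exact ⟨le_rfl, fun hprog => absurd hprog.1 hne⟩
    · simp
  | ax | wk | ur' =>
    obtain rfl : C' = C := h
    exact ⟨le_rfl, False.elim⟩

variable {T : CPreProof RSYS}

noncomputable def CPreProof.maxDepth (T : CPreProof RSYS) : ℕ :=
  T.fin.toFinset.sup fun p => (T.seq p).1.sup Formula.depth

lemma CPreProof.depth_le_maxDepth_of_tstep {p p' : List ℕ} {C C' : Formula sigP} {b : Bool}
    (hp : p ∈ T.dom) (h : T.tstep p p' C C' b) : C.depth ≤ T.maxDepth := by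
  have hC : C ∈ (T.seq p).1 := by
    rcases h with ⟨-, -, -, hant, -⟩ | ⟨_, _, _, -, htrace, -⟩
    exacts [hant.1, htrace.1]
  exact (Finset.le_sup hC).trans
    (Finset.le_sup (f := fun p => (T.seq p).1.sup Formula.depth) (T.fin.mem_toFinset.mpr hp))

lemma CPreProof.depth_le_of_tstep (hT : T.namesUsed ⊆ {ν | ν ≠ .subst})
    {p p' : List ℕ} {C C' : Formula sigP} {b : Bool}
    (h : T.tstep p p' C C' b) : C.depth ≤ C'.depth ∧ (b = true → C.depth < C'.depth) := by
  rcases h with ⟨-, -, rfl, -, rfl⟩ | ⟨hp, hb, i, -, htrace, hprog⟩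
  · simp
  · have := (T.rule p hp hb).depth_le_of_core (hT ⟨p, hp, hb, rfl⟩) htrace.2.2.2.2
    exact ⟨this.1, fun hbt => this.2 (hprog hbt).2⟩

lemma CPreProof.nonempty_cPath_of_substFree (hT : T.namesUsed ⊆ {ν | ν ≠ .subst})
    (hroot : (T.seq []).2 = ∅) : Nonempty (CPath T) := by
  refine T.nonempty_cPath_of_invariant (fun p => (T.seq p).2 = ∅) hroot fun p hp hempty => ?_
  by_cases hb : T.bud p
  · exact ⟨T.comp p, by rw [T.comp_seq p hp hb, hempty], Or.inl ⟨hb, rfl⟩⟩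
  · rw [Bool.not_eq_true] at hb
    obtain ⟨Γ', hps⟩ :=
      (T.rule p hp hb).premises_eq_of_succedent_eq_empty (hT ⟨p, hp, hb, rfl⟩) hempty
    have hlen : 0 < (T.prems p).length := by simp [hps]
    refine ⟨p ++ [0], ?_, Or.inr ⟨0, rfl, (T.child_mem p hp hb 0).mpr hlen⟩⟩
    simp [T.child_seq p hp hb 0 hlen, hps]

end SubstFree

theorem not_provableWith_substFree {e : GSequent (Formula sigP)} (he : e.2 = ∅) :
    ¬ RSYS.ProvableWith {ν | ν ≠ .subst} e := by
  rintro ⟨T, hroot, hgtc, hT⟩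
  obtain ⟨π⟩ := T.nonempty_cPath_of_substFree hT (hroot ▸ he)
  obtain ⟨k, C, b, htr, hinf⟩ := hgtc π
  have hdepth := fun n (hn : k ≤ n) => T.depth_le_of_tstep hT (htr n hn)
  let u : ℕ → ℕ := fun i => (C (k + i)).depth
  have hmono : Monotone u := monotone_nat_of_le_succ fun i => (hdepth (k + i) (by omega)).1
  have hfreq : ∀ m, ∃ n, m ≤ n ∧ u n < u (n + 1) := by
    intro m
    obtain ⟨n, hn, hb⟩ := hinf (k + m)
    refine ⟨n - k, by omega, ?_⟩
    simpa [u, show k + (n - k) = n by omega, ← add_assoc] using (hdepth n (by omega)).2 hb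
  obtain ⟨n, hn⟩ := exists_gt_of_monotone_of_frequently_lt hmono hfreq T.maxDepth
  exact hn.not_ge (T.depth_le_maxDepth_of_tstep (π.mem _) (htr (k + n) (by omega)))

/-- Non-admissibility of substitution in a restricted cyclic
system. In the cyclic-proof system whose only inference rules are `(UL')`,
`(UR)`, `(Axiom)`, `(Wk)` and `(Subst)` (for `P` defined by the single
production `P(x) ⇐ P(sx)`), the sequent `P(x) ⊢ ⊥` (formalized with the empty
succedent) is provable, but it is not provable without the rule (Subst). -/
theorem restricted_system_subst_not_admissible :
    RSYS.ProvableWith Set.univ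
      ({Pat (Term.fvar 0)}, (∅ : Finset (Formula sigP))) ∧
    ¬ RSYS.ProvableWith {ν | ν ≠ RuleName.subst}
      ({Pat (Term.fvar 0)}, (∅ : Finset (Formula sigP))) :=
  ⟨provableWith_Pat_fvar 0, not_provableWith_substFree rfl⟩

end CyclicProofs
end

section
/- (Cut-free provability of P(x)⊢⊥ in CLKID^ω without substitution) Let P be the inductive predicate defined by the single production P(x) ⇐ P(sx). In cut-free CLKID^ω, with the standard case-distinction left-unfolding rule (UL) (which derives P(x),Γ⊢Δ from y=x,P(sy),Γ⊢Δ with y fresh), the sequent P(x)⊢⊥ is provable without any use of the rule (Subst). -/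
set_option maxHeartbeats 1000000

namespace CyclicProofs

variable {S : Signature}

variable {Q F N Sb : Type}

variable {D : DerivSystem Q F N Sb}

variable {Φ : Finset (Production S)}

/-- The single production `P(x) ⇐ P(s x)` (with `x` the free variable `0`). -/
def prodP : Production sigP where
  pred := ()
  args := fun _ => Term.fvar 0
  ordPrems := []
  indPrems := [⟨(), fun _ => Term.func () (fun _ => Term.fvar 0)⟩]

/-- The definition set `Φ = {P(x) ⇐ P(s x)}`. -/
def PhiP : Finset (Production sigP) := {prodP}

/-!
Unfolding `P t ⊢` with a fresh variable `y` yields `t = y, P (s y) ⊢`, and weakening away the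
equation leaves `P (s y) ⊢`. Letting the fresh variable alternate between `x₁` and `x₀` gives
`P x₀ ⊢`, `P (s x₁) ⊢`, `P (s x₀) ⊢`, `P (s x₁) ⊢`: the last sequent repeats the second verbatim,
so the derivation closes into a cycle without (Subst). The `P`-atom is traced along the whole
spine and is unfolded on every pass around the cycle, which is the global trace condition.
-/

section Lasso

variable {n c : ℕ} {s : ℕ → Q} {r : ∀ k < n, D.App (s k) [s (k + 1)]} {hc : c < n}
  {hbud : s n = s c}

theorem exists_ge_eq_of_lasso_step {f : ℕ → ℕ} (hf : ∀ m, f m ≤ n)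
    (hstep : ∀ m, f (m + 1) = if f m = n then c else f m + 1) {k : ℕ} (hck : c ≤ k)
    (hkn : k ≤ n) (m : ℕ) : ∃ m' ≥ m, f m' = k := by
  have hfm := hf m
  have climb : ∀ m j, f m + j ≤ n → f (m + j) = f m + j := by
    intro m j
    induction j with
    | zero => simp
    | succ j ih =>
      intro hj
      rw [← add_assoc, hstep, ih (by omega), if_neg (by omega), add_assoc]
  by_cases hmk : f m ≤ k
  · exact ⟨m + (k - f m), by omega, by rw [climb m _ (by omega)]; omega⟩
  · have hend : f (m + (n - f m)) = n := by rw [climb m _ (by omega)]; omega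
    have hloop : f (m + (n - f m) + 1) = c := by rw [hstep, if_pos hend]
    exact ⟨m + (n - f m) + 1 + (k - c), by omega, by rw [climb _ _ (by omega)]; omega⟩

namespace CPreProof

variable (s r hc hbud) in
/-- A single branch `s 0, …, s n` whose leaf `s n` is a bud with companion `s c`. -/
def lasso : CPreProof D where
  dom := {p | (∀ i ∈ p, i = 0) ∧ p.length ≤ n}
  fin := by
    refine ((Set.finite_Iic n).image (List.replicate · 0)).subset ?_
    rintro p ⟨hp, hlen⟩
    exact ⟨p.length, hlen, (List.eq_replicate_iff.2 ⟨rfl, hp⟩).symm⟩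
  root_mem := by simp
  down p i := by
    rintro ⟨hp, hlen⟩
    exact ⟨fun j hj => hp j (List.mem_append_left _ hj), by simp at hlen; omega⟩
  seq p := s p.length
  prems p := [s (p.length + 1)]
  bud p := decide (p.length = n)
  rule p hp hb := r p.length (lt_of_le_of_ne hp.2 (by simpa using hb))
  child_mem p hp hb i := by
    simp only [decide_eq_false_iff_not] at hb
    show (∀ j ∈ p ++ [i], j = 0) ∧ (p ++ [i]).length ≤ n ↔ i < 1
    simp only [List.mem_append, List.mem_singleton, List.length_append, List.length_cons,
      List.length_nil]
    constructor
    · rintro ⟨h0, -⟩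
      simp [h0 i (Or.inr rfl)]
    · intro hi
      refine ⟨?_, by have := hp.2; omega⟩
      rintro j (hj | rfl)
      exacts [hp.1 j hj, by simpa using hi]
  child_seq p _ _ i hi := by
    obtain rfl : i = 0 := by simpa using hi
    simp
  bud_leaf p _ hb i := by
    simp only [decide_eq_true_eq] at hb
    simp [hb]
  comp _ := List.replicate c 0
  comp_mem _ _ _ := ⟨by simp, by simp; omega⟩
  comp_not_bud _ _ _ := by simp; omega
  comp_seq p _ hb := by
    simp only [decide_eq_true_eq] at hb
    simp [hb, hbud]

theorem lasso_seq_nil : (lasso s r hc hbud).seq [] = s 0 := rfl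

theorem lasso_length_pos_le (π : CPath (lasso s r hc hbud)) (m : ℕ) :
    (π.pos m).length ≤ n :=
  (π.mem m).2

theorem lasso_length_pos_succ (π : CPath (lasso s r hc hbud)) (m : ℕ) :
    (π.pos (m + 1)).length = if (π.pos m).length = n then c else (π.pos m).length + 1 := by
  rcases π.step m with ⟨hb, hcomp⟩ | ⟨i, hpos, hmem⟩
  · simp only [lasso, decide_eq_true_eq] at hb hcomp
    simp [hb, hcomp]
  · have hlen := hmem.2
    simp only [List.length_append, List.length_cons, List.length_nil] at hlen
    rw [hpos, if_neg (by omega)]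
    simp

theorem lasso_gtc (C : ℕ → F) (htrace : ∀ k (hk : k < n), D.trace (r k hk) 0 (C k) (C (k + 1)))
    (hC : C n = C c) (hant : D.inAnt (s n) (C n)) {k₀ : ℕ} (hck₀ : c ≤ k₀) (hk₀ : k₀ < n)
    (hprog : D.prog (r k₀ hk₀) 0 (C k₀) (C (k₀ + 1))) : (lasso s r hc hbud).GTC := by
  intro π
  have hprog' : ∀ k (hk : k < n), k = k₀ → D.prog (r k hk) 0 (C k) (C (k + 1)) := by
    rintro k hk rfl
    exact hprog
  refine ⟨0, fun m => C (π.pos m).length, fun m => decide ((π.pos m).length = k₀),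
    fun m _ => ?_, fun m => ?_⟩
  · have hsucc := lasso_length_pos_succ π m
    by_cases hm : (π.pos m).length = n
    · rw [if_pos hm] at hsucc
      rcases π.step m with hbud' | ⟨i, -, hmem⟩
      · refine Or.inl ⟨hbud'.1, hbud'.2, by simp [hsucc, hm, hC], ?_, by simp [hm]; omega⟩
        show D.inAnt (s (π.pos m).length) (C (π.pos m).length)
        rwa [hm]
      · have := hmem.2
        simp at this
        omega
    · rw [if_neg hm] at hsucc
      have hb : (lasso s r hc hbud).bud (π.pos m) = false := by simpa [lasso] using hm
      have hlt : (π.pos m).length < n := lt_of_le_of_ne (lasso_length_pos_le π m) hm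
      rcases π.step m with ⟨hb', -⟩ | ⟨i, hpos, hmem⟩
      · simp [hb] at hb'
      obtain rfl : i = 0 := hmem.1 i (by simp)
      refine Or.inr ⟨π.mem m, hb, 0, hpos, ?_, fun hk => ?_⟩
      · show D.trace (r _ hlt) 0 (C (π.pos m).length) (C (π.pos (m + 1)).length)
        rw [hsucc]
        exact htrace _ hlt
      · show D.prog (r _ hlt) 0 (C (π.pos m).length) (C (π.pos (m + 1)).length)
        rw [hsucc]
        exact hprog' _ hlt (by simpa using hk)
  · obtain ⟨m', hm', hk⟩ := exists_ge_eq_of_lasso_step (lasso_length_pos_le π)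
      (lasso_length_pos_succ π) hck₀ hk₀.le m
    exact ⟨m', hm', by simpa using hk⟩

theorem lasso_namesUsed_subset {A : Set N} (h : ∀ k (hk : k < n), D.name (r k hk) ∈ A) :
    (lasso s r hc hbud).namesUsed ⊆ A := by
  rintro ν ⟨p, hp, hb, rfl⟩
  exact h _ _

end CPreProof

end Lasso

section UnfoldP

abbrev atomP (t : Term sigP) : Formula sigP := Formula.ind () (fun _ => t)

abbrev succT (t : Term sigP) : Term sigP := Term.func () (fun _ => t)

abbrev atomSeq (t : Term sigP) : GSequent (Formula sigP) := ({atomP t}, ∅)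

noncomputable abbrev caseSeq (t : Term sigP) (y : ℕ) : GSequent (Formula sigP) :=
  caseDist ∅ ∅ () (fun _ => t) prodP (fun _ => Term.fvar y)

theorem caseSeq_eq (t : Term sigP) (y : ℕ) :
    caseSeq t y = ({Formula.eq t (Term.fvar y), atomP (succT (Term.fvar y))}, ∅) := by
  unfold caseSeq caseDist
  split
  case isFalse h => exact absurd rfl h
  case isTrue h =>
    ext φ
    · have : Nonempty (Fin (sigP.indArity ())) := ⟨(0 : Fin 1)⟩
      simp [prodP, Term.subst, eq_comm]
      exact or_comm
    · simp

theorem atomP_succT_mem_caseSeq (t : Term sigP) (y : ℕ) :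
    atomP (succT (Term.fvar y)) ∈ (caseSeq t y).1 := by
  simp [caseSeq_eq]

theorem fvSeq_atomSeq (t : Term sigP) : fvSeq (atomSeq t) = t.fv := by
  ext x
  simpa [fvSeq, Formula.fv] using fun _ => ⟨(0 : Fin 1)⟩

theorem freshening_prodP {y : ℕ} {X : Set ℕ} (hy : y ∉ X) :
    Freshening (fun _ => Term.fvar y : Subst sigP) prodP X := by
  have hfv : ∀ z ∈ Production.fv prodP, z = 0 := by
    intro z hz
    simp [Production.fv, prodP, Term.fv] at hz
    omega
  refine ⟨fun _ => ⟨y, rfl⟩, ?_, fun z₁ h₁ z₂ h₂ _ => by rw [hfv z₁ h₁, hfv z₂ h₂]⟩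
  rintro z - y' ⟨⟩
  exact hy

noncomputable def unfoldP (t : Term sigP) (y : ℕ) (hy : y ∉ t.fv := by simp [Term.fv]) :
    RuleApp PhiP (atomSeq t) [caseSeq t y] :=
  RuleApp.ul ∅ ∅ () (fun _ => t) [prodP] [fun _ => Term.fvar y] rfl (List.nodup_singleton _)
    (fun pr => by simpa [PhiP] using fun h : pr = prodP => h ▸ rfl)
    (by
      rintro ⟨pr, σ⟩ h
      obtain ⟨rfl, rfl⟩ : pr = prodP ∧ σ = fun _ => Term.fvar y := by simpa using h
      exact freshening_prodP (show y ∉ fvSeq (atomSeq t) by rwa [fvSeq_atomSeq]))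

noncomputable def weakenCaseSeq (t : Term sigP) (y : ℕ) :
    RuleApp PhiP (caseSeq t y) [atomSeq (succT (Term.fvar y))] :=
  RuleApp.wk _ _ _ _ (Finset.singleton_subset_iff.2 (atomP_succT_mem_caseSeq t y))
    (Finset.empty_subset _)

theorem unfoldP_progStep (t : Term sigP) (y : ℕ) (hy : y ∉ t.fv := by simp [Term.fv]) :
    (unfoldP t y hy).progStep 0 (atomP t) (atomP (succT (Term.fvar y))) := by
  have hprog : (unfoldP t y hy).progCore 0 (atomP t) (atomP (succT (Term.fvar y))) :=
    ⟨rfl, by simp, _, List.mem_singleton_self _, rfl⟩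
  exact ⟨⟨by simp, trivial, trivial, ⟨by simp, atomP_succT_mem_caseSeq t y⟩, Or.inr hprog⟩,
    hprog⟩

theorem weakenCaseSeq_traceStep (t : Term sigP) (y : ℕ) :
    (weakenCaseSeq t y).traceStep 0 (atomP (succT (Term.fvar y)))
      (atomP (succT (Term.fvar y))) :=
  ⟨atomP_succT_mem_caseSeq t y, trivial, trivial, ⟨by simp, by simp⟩, rfl⟩

end UnfoldP

section Spine

local notation "x₀" => Term.fvar 0
local notation "x₁" => Term.fvar 1

noncomputable def spine : ℕ → GSequent (Formula sigP)
  | 0 => atomSeq x₀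
  | 1 => caseSeq x₀ 1
  | 2 => atomSeq (succT x₁)
  | 3 => caseSeq (succT x₁) 0
  | 4 => atomSeq (succT x₀)
  | 5 => caseSeq (succT x₀) 1
  | _ => atomSeq (succT x₁)

noncomputable def spineRule : ∀ k < 6, RuleApp PhiP (spine k) [spine (k + 1)]
  | 0, _ => unfoldP x₀ 1
  | 1, _ => weakenCaseSeq x₀ 1
  | 2, _ => unfoldP (succT x₁) 0
  | 3, _ => weakenCaseSeq (succT x₁) 0
  | 4, _ => unfoldP (succT x₀) 1
  | 5, _ => weakenCaseSeq (succT x₀) 1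
  | _ + 6, h => absurd h (by omega)

def spineToken : ℕ → Formula sigP
  | 0 => atomP x₀
  | 1 | 2 => atomP (succT x₁)
  | 3 | 4 => atomP (succT x₀)
  | _ => atomP (succT x₁)

theorem spineRule_traceStep :
    ∀ k (hk : k < 6), (spineRule k hk).traceStep 0 (spineToken k) (spineToken (k + 1))
  | 0, _ => (unfoldP_progStep _ _).1
  | 1, _ => weakenCaseSeq_traceStep _ _
  | 2, _ => (unfoldP_progStep _ _).1
  | 3, _ => weakenCaseSeq_traceStep _ _
  | 4, _ => (unfoldP_progStep _ _).1
  | 5, _ => weakenCaseSeq_traceStep _ _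
  | _ + 6, h => absurd h (by omega)

theorem spineRule_name :
    ∀ k (hk : k < 6), (spineRule k hk).name = .ul ∨ (spineRule k hk).name = .wk
  | 0, _ | 2, _ | 4, _ => Or.inl rfl
  | 1, _ | 3, _ | 5, _ => Or.inr rfl
  | _ + 6, h => absurd h (by omega)

end Spine

/-- Cut-free provability of `P(x) ⊢ ⊥` in `CLKID^ω` without
substitution. For `P` defined by the single production `P(x) ⇐ P(sx)`, the
sequent `P(x) ⊢ ⊥` (formalized with the empty succedent, which is
unsatisfiable) is provable in cut-free `CLKID^ω` — with the standard
case-distinction left-unfolding rule (UL) — without any use of (Subst) (and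
without the added rule `(fresh L)`). -/
theorem px_bot_provable_cut_free_subst_free :
    (CLKID sigP PhiP).ProvableWith
      (clkidNames ∩ {ν | ν ≠ RuleName.cut ∧ ν ≠ RuleName.subst})
      ({Formula.ind () (fun _ => Term.fvar 0)}, (∅ : Finset (Formula sigP))) := by
  refine ⟨CPreProof.lasso (D := CLKID sigP PhiP) spine spineRule (c := 2) (by norm_num) rfl,
    CPreProof.lasso_seq_nil, ?_, ?_⟩
  · exact CPreProof.lasso_gtc spineToken spineRule_traceStep rfl
      ⟨Finset.mem_singleton_self _, trivial⟩ le_rfl (by norm_num) (unfoldP_progStep _ _)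
  · refine CPreProof.lasso_namesUsed_subset fun k hk => ?_
    rcases spineRule_name k hk with h | h <;>
      simp [CLKID, h, clkidNames]

end CyclicProofs
end
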